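/- arXiv:1005.4084 — 8 statements merged into one kernel-verified Lean document; each statement's English description precedes it below -/
import Mathlib

section
/- Let (Y,d) be a complete p-uniformly convex geodesic metric space with constant c>0, and let σ be a finitely supported probability measure on Y. Then there is a unique point c_p(σ) ∈ Y minimizing the function y ↦ (∫ d(u,y)^p dσ(u))^{1/p}. Moreover, any two points y,z whose value of ∫ d(u,·)^p dσ(u) exceeds the infimum d^p by at most ε satisfy (c/4)·d(y,z)^p ≤ ε. -/
open Set

/-- A geodesic segment from `y` to `z`, parametrized proportionally to arc length on `[0,1]`. -/
def IsGeodesicSeg {Y : Type*} [MetricSpace Y] (γ : ℝ → Y) (y z : Y) : Prop :=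
  γ 0 = y ∧ γ 1 = z ∧
    ∀ s ∈ Icc (0:ℝ) 1, ∀ t ∈ Icc (0:ℝ) 1, dist (γ s) (γ t) = |s - t| * dist y z

/-- A geodesic metric space: every two points are joined by a geodesic segment. -/
def GeodesicSpace (Y : Type*) [MetricSpace Y] : Prop :=
  ∀ y z : Y, ∃ γ : ℝ → Y, IsGeodesicSeg γ y z

/-- The `p`-uniform convexity inequality with constant `c`. -/
def PUnifConvex (Y : Type*) [MetricSpace Y] (p c : ℝ) : Prop :=
  ∀ (x y z : Y) (γ : ℝ → Y), IsGeodesicSeg γ y z → ∀ t ∈ Icc (0:ℝ) 1,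
    dist x (γ t) ^ p ≤
      (1 - t) * dist x y ^ p + t * dist x z ^ p - c * t * (1 - t) * dist y z ^ p

open Filter Topology Metric

/-!
Applying `p`-uniform convexity at the midpoint of a geodesic and averaging against `σ` shows
that the `p`-moment `F` satisfies `F m ≤ (F y + F z) / 2 - (c/4) d(y,z)^p` for some `m`.
Since `F m` is at least the infimum, two `ε`-almost-minimizers are at distance at most
`(4ε/c)^(1/p)`; this is the quantitative statement, it gives uniqueness for `ε = 0`, and it makes
the closed sublevel sets `{F ≤ inf F + 1/(n+1)}` a nested sequence with diameters tending to
zero, whose intersection in the complete space `Y` is the minimizer.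
-/

section MidpointDecrease

variable {Y : Type*} [MetricSpace Y] {F : Y → ℝ} {κ p : ℝ}

theorem mul_dist_rpow_le_of_le_sInf_add (hF : BddBelow (range F))
    (hmid : ∀ y z, ∃ m, F m ≤ (F y + F z) / 2 - κ * dist y z ^ p) {ε : ℝ} {y z : Y}
    (hy : F y ≤ sInf (range F) + ε) (hz : F z ≤ sInf (range F) + ε) :
    κ * dist y z ^ p ≤ ε := by
  obtain ⟨m, hm⟩ := hmid y z
  have := csInf_le hF ⟨m, rfl⟩
  linarith

theorem dist_le_of_le_sInf_add (hκ : 0 < κ) (hp : 0 < p) (hF : BddBelow (range F))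
    (hmid : ∀ y z, ∃ m, F m ≤ (F y + F z) / 2 - κ * dist y z ^ p) {ε : ℝ} (hε : 0 ≤ ε)
    {y z : Y} (hy : F y ≤ sInf (range F) + ε) (hz : F z ≤ sInf (range F) + ε) :
    dist y z ≤ (ε / κ) ^ p⁻¹ := by
  rw [Real.le_rpow_inv_iff_of_pos dist_nonneg (by positivity) hp, le_div_iff₀ hκ, mul_comm]
  exact mul_dist_rpow_le_of_le_sInf_add hF hmid hy hz

theorem exists_forall_le_of_midpoint_le [CompleteSpace Y] [Nonempty Y] (hκ : 0 < κ)
    (hp : 0 < p) (hF : LowerSemicontinuous F) (hFb : BddBelow (range F))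
    (hmid : ∀ y z, ∃ m, F m ≤ (F y + F z) / 2 - κ * dist y z ^ p) :
    ∃ m, ∀ y, F m ≤ F y := by
  set d := sInf (range F)
  set s : ℕ → Set Y := fun n => {y | F y ≤ d + 1 / (n + 1)}
  have hs_dist : ∀ n, ∀ y ∈ s n, ∀ z ∈ s n, dist y z ≤ (1 / ((n : ℝ) + 1) / κ) ^ p⁻¹ :=
    fun n y hy z hz => dist_le_of_le_sInf_add hκ hp hFb hmid (by positivity) hy hz
  have hs_nonempty : ∀ n, (s n).Nonempty := fun n => by
    obtain ⟨_, ⟨y, rfl⟩, hy⟩ :=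
      exists_lt_of_csInf_lt (range_nonempty F) (lt_add_of_pos_right d Nat.one_div_pos_of_nat)
    exact ⟨y, hy.le⟩
  have hs_anti : Antitone s := fun n k hnk y (hy : F y ≤ d + 1 / (k + 1)) =>
    hy.trans ((add_le_add_iff_left d).2 (Nat.one_div_le_one_div hnk))
  have hbound : Tendsto (fun n : ℕ => (1 / ((n : ℝ) + 1) / κ) ^ p⁻¹) atTop (𝓝 0) := by
    simpa [Real.zero_rpow (inv_ne_zero hp.ne')] using
      (tendsto_one_div_add_atTop_nhds_zero_nat.div_const κ).rpow_const
        (Or.inr (inv_nonneg.2 hp.le))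
  have hdiam : Tendsto (fun n => diam (s n)) atTop (𝓝 0) :=
    squeeze_zero (fun _ => diam_nonneg)
      (fun n => diam_le_of_forall_dist_le (by positivity) (hs_dist n)) hbound
  obtain ⟨m, hm⟩ := nonempty_iInter_of_nonempty_biInter (fun n => hF.isClosed_preimage _)
    (fun n => isBounded_iff.2 ⟨_, hs_dist n⟩)
    (fun N => (hs_nonempty N).mono (subset_iInter₂ fun n hn => hs_anti hn)) hdiam
  have hlim : Tendsto (fun n : ℕ => d + 1 / ((n : ℝ) + 1)) atTop (𝓝 d) := by
    simpa using tendsto_one_div_add_atTop_nhds_zero_nat.const_add d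
  have hmd : F m ≤ d := ge_of_tendsto' hlim (mem_iInter.1 hm)
  exact ⟨m, fun y => hmd.trans (csInf_le hFb ⟨y, rfl⟩)⟩

theorem existsUnique_forall_le_of_midpoint_le [CompleteSpace Y] [Nonempty Y] (hκ : 0 < κ)
    (hp : 0 < p) (hF : LowerSemicontinuous F) (hFb : BddBelow (range F))
    (hmid : ∀ y z, ∃ m, F m ≤ (F y + F z) / 2 - κ * dist y z ^ p) :
    ∃! m, ∀ y, F m ≤ F y := by
  obtain ⟨m, hm⟩ := exists_forall_le_of_midpoint_le hκ hp hF hFb hmid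
  refine ⟨m, hm, fun m' hm' => dist_le_zero.1 ?_⟩
  have hmin : ∀ x, (∀ y, F x ≤ F y) → F x ≤ sInf (range F) + 0 := fun x hx =>
    (add_zero (sInf (range F))).symm ▸ le_csInf (range_nonempty F) (forall_mem_range.2 hx)
  have := dist_le_of_le_sInf_add hκ hp hFb hmid le_rfl (hmin m' hm') (hmin m hm)
  rwa [zero_div, Real.zero_rpow (inv_ne_zero hp.ne')] at this

end MidpointDecrease

section PMoment

variable {Y ι : Type*} [MetricSpace Y] [Fintype ι]

/-- The `p`-moment `y ↦ ∫ d(u, y)^p dσ(u)` of the measure `σ = ∑ i, w i • δ (u i)`. -/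
noncomputable def pMoment (u : ι → Y) (w : ι → ℝ) (p : ℝ) (y : Y) : ℝ :=
  ∑ i, w i * dist (u i) y ^ p

theorem bddBelow_range_pMoment (u : ι → Y) {w : ι → ℝ} (hw : ∀ i, 0 ≤ w i) (p : ℝ) :
    BddBelow (range (pMoment u w p)) :=
  ⟨0, forall_mem_range.2 fun _ =>
    Finset.sum_nonneg fun i _ => mul_nonneg (hw i) (Real.rpow_nonneg dist_nonneg p)⟩

theorem continuous_pMoment (u : ι → Y) (w : ι → ℝ) {p : ℝ} (hp : 0 ≤ p) :
    Continuous (pMoment u w p) :=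
  continuous_finsetSum _ fun _ _ =>
    continuous_const.mul ((continuous_const.dist continuous_id).rpow_const fun _ => Or.inr hp)

theorem PUnifConvex.exists_pMoment_le_midpoint {p c : ℝ} (hconv : PUnifConvex Y p c)
    (hgeo : GeodesicSpace Y) (u : ι → Y) {w : ι → ℝ} (hw : ∀ i, 0 ≤ w i)
    (hw1 : ∑ i, w i = 1) (y z : Y) :
    ∃ m, pMoment u w p m ≤ (pMoment u w p y + pMoment u w p z) / 2 - c / 4 * dist y z ^ p := by
  obtain ⟨γ, hγ⟩ := hgeo y z
  refine ⟨γ (1 / 2), ?_⟩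
  calc pMoment u w p (γ (1 / 2))
      ≤ ∑ i, w i * ((1 - 1 / 2) * dist (u i) y ^ p + 1 / 2 * dist (u i) z ^ p
          - c * (1 / 2) * (1 - 1 / 2) * dist y z ^ p) :=
        Finset.sum_le_sum fun i _ => mul_le_mul_of_nonneg_left
          (hconv (u i) y z γ hγ (1 / 2) ⟨by norm_num, by norm_num⟩) (hw i)
    _ = (pMoment u w p y + pMoment u w p z) / 2 - c / 4 * dist y z ^ p * ∑ i, w i := by
        simp only [pMoment, Finset.mul_sum, ← Finset.sum_add_distrib, Finset.sum_div,
          ← Finset.sum_sub_distrib]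
        exact Finset.sum_congr rfl fun i _ => by ring
    _ = (pMoment u w p y + pMoment u w p z) / 2 - c / 4 * dist y z ^ p := by rw [hw1, mul_one]

end PMoment

/-- Existence and uniqueness of the geometric `p`-center of mass of a finitely supported
probability measure on a complete `p`-uniformly convex geodesic metric space, together with
the quantitative statement: any two `ε`-almost-minimizers `y, z` of the `p`-moment satisfy
`(c/4) · d(y,z)^p ≤ ε`. -/
theorem stmt2 {Y : Type*} [MetricSpace Y] [CompleteSpace Y] (p c : ℝ) (hp : 2 ≤ p)
    (hc : 0 < c) (hgeo : GeodesicSpace Y) (hconv : PUnifConvex Y p c)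
    {n : ℕ} (u : Fin n → Y) (w : Fin n → ℝ) (hw : ∀ i, 0 ≤ w i) (hw1 : ∑ i, w i = 1) :
    (∃! m : Y, ∀ y : Y, ∑ i, w i * dist (u i) m ^ p ≤ ∑ i, w i * dist (u i) y ^ p) ∧
    (∀ ε : ℝ, 0 ≤ ε → ∀ y z : Y,
      (∑ i, w i * dist (u i) y ^ p ≤
        sInf (Set.range fun y' : Y => ∑ i, w i * dist (u i) y' ^ p) + ε) →
      (∑ i, w i * dist (u i) z ^ p ≤
        sInf (Set.range fun y' : Y => ∑ i, w i * dist (u i) y' ^ p) + ε) →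
      (c / 4) * dist y z ^ p ≤ ε) := by
  have hp0 : 0 < p := by linarith
  obtain ⟨i, -⟩ := Finset.exists_ne_zero_of_sum_ne_zero (hw1 ▸ one_ne_zero : ∑ i, w i ≠ 0)
  have : Nonempty Y := ⟨u i⟩
  have hbdd := bddBelow_range_pMoment u hw p
  have hmid := hconv.exists_pMoment_le_midpoint hgeo u hw hw1
  exact ⟨existsUnique_forall_le_of_midpoint_le (by positivity) hp0
      (continuous_pMoment u w hp0.le).lowerSemicontinuous hbdd hmid,
    fun ε _ y z => mul_dist_rpow_le_of_le_sInf_add hbdd hmid⟩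
end

section
/- Let (Y,d) be a complete p-uniformly convex geodesic metric space with constant c, σ a finitely supported probability measure on Y, and c_p(σ) its p-center of mass. Then for every y ∈ Y: ∫ d(u,y)^p dσ(u) ≥ ∫ d(u,c_p(σ))^p dσ(u) + c·d(c_p(σ),y)^p. -/
/-!
Write `F y = ∑ wᵢ d(uᵢ, y)^p` and move from the minimizer `m` towards `y` along a geodesic
`γ`. Summing the uniform convexity inequality against the weights and using minimality at `γ t`
gives
`F m ≤ (1 - t) F m + t F y - c t (1 - t) d(m, y)^p`; dividing by `t > 0` and letting `t → 0⁺`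
yields `F m + c d(m, y)^p ≤ F y`.
-/

open Set

open Filter Topology

theorem add_le_of_forall_le_lineMap {a b K : ℝ}
    (h : ∀ t ∈ Ioc (0:ℝ) 1, a ≤ (1 - t) * a + t * b - K * t * (1 - t)) : a + K ≤ b := by
  have hbound : ∀ t ∈ Ioc (0:ℝ) 1, K * (1 - t) ≤ b - a := fun t ht => by
    refine le_of_mul_le_mul_left ?_ ht.1
    linarith [h t ht]
  have hlim : Tendsto (fun t : ℝ => K * (1 - t)) (𝓝[>] 0) (𝓝 K) := by
    have : Tendsto (fun t : ℝ => K * (1 - t)) (𝓝 0) (𝓝 (K * (1 - 0))) :=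
      (continuous_const.mul (continuous_const.sub continuous_id)).tendsto 0
    simpa using this.mono_left nhdsWithin_le_nhds
  have hev : ∀ᶠ t in 𝓝[>] (0:ℝ), K * (1 - t) ≤ b - a := by
    filter_upwards [Ioc_mem_nhdsGT (zero_lt_one' ℝ)] with t ht using hbound t ht
  linarith [le_of_tendsto hlim hev]

theorem PUnifConvex.sum_mul_dist_rpow_le {Y : Type*} [MetricSpace Y] {p c : ℝ}
    (hconv : PUnifConvex Y p c) {ι : Type*} [Fintype ι] (u : ι → Y) {w : ι → ℝ}
    (hw : ∀ i, 0 ≤ w i) (hw1 : ∑ i, w i = 1) {γ : ℝ → Y} {y z : Y}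
    (hγ : IsGeodesicSeg γ y z) {t : ℝ} (ht : t ∈ Icc (0:ℝ) 1) :
    ∑ i, w i * dist (u i) (γ t) ^ p ≤
      (1 - t) * ∑ i, w i * dist (u i) y ^ p + t * ∑ i, w i * dist (u i) z ^ p
        - c * t * (1 - t) * dist y z ^ p :=
  calc ∑ i, w i * dist (u i) (γ t) ^ p
      ≤ ∑ i, w i * ((1 - t) * dist (u i) y ^ p + t * dist (u i) z ^ p
          - c * t * (1 - t) * dist y z ^ p) :=
        Finset.sum_le_sum fun i _ =>
          mul_le_mul_of_nonneg_left (hconv (u i) y z γ hγ t ht) (hw i)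
    _ = (1 - t) * ∑ i, w i * dist (u i) y ^ p + t * ∑ i, w i * dist (u i) z ^ p
          - c * t * (1 - t) * dist y z ^ p * ∑ i, w i := by
        simp only [Finset.mul_sum, ← Finset.sum_add_distrib, ← Finset.sum_sub_distrib]
        exact Finset.sum_congr rfl fun i _ => by ring
    _ = _ := by rw [hw1, mul_one]

theorem stmt3_general {Y : Type*} [MetricSpace Y] (p c : ℝ)
    (hgeo : GeodesicSpace Y) (hconv : PUnifConvex Y p c)
    {n : ℕ} (u : Fin n → Y) (w : Fin n → ℝ) (hw : ∀ i, 0 ≤ w i) (hw1 : ∑ i, w i = 1)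
    (m : Y) (hm : ∀ y : Y, ∑ i, w i * dist (u i) m ^ p ≤ ∑ i, w i * dist (u i) y ^ p) :
    ∀ y : Y, ∑ i, w i * dist (u i) m ^ p + c * dist m y ^ p ≤ ∑ i, w i * dist (u i) y ^ p := by
  intro y
  obtain ⟨γ, hγ⟩ := hgeo m y
  refine add_le_of_forall_le_lineMap fun t ht => ?_
  have h := hconv.sum_mul_dist_rpow_le u hw hw1 hγ (Ioc_subset_Icc_self ht)
  linarith [hm (γ t)]

/-- The growth inequality for the `p`-center of mass: for every `y`,
`∫ d(u,y)^p dσ ≥ ∫ d(u, c_p(σ))^p dσ + c · d(c_p(σ), y)^p`. -/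
theorem stmt3 {Y : Type*} [MetricSpace Y] [CompleteSpace Y] (p c : ℝ) (hp : 2 ≤ p)
    (hc : 0 < c) (hgeo : GeodesicSpace Y) (hconv : PUnifConvex Y p c)
    {n : ℕ} (u : Fin n → Y) (w : Fin n → ℝ) (hw : ∀ i, 0 ≤ w i) (hw1 : ∑ i, w i = 1)
    (m : Y) (hm : ∀ y : Y, ∑ i, w i * dist (u i) m ^ p ≤ ∑ i, w i * dist (u i) y ^ p) :
    ∀ y : Y, ∑ i, w i * dist (u i) m ^ p + c * dist m y ^ p ≤ ∑ i, w i * dist (u i) y ^ p :=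
  stmt3_general p c hgeo hconv u w hw hw1 m hm
end

section
/- Let (Y,d) be a uniformly convex complete geodesic metric space, and let Γ be a group acting on Y by isometries. If some Γ-orbit in Y is bounded, then Γ has a common fixed point in Y. -/
/-! The circumcenter of a bounded orbit — the point minimizing the largest distance to the
orbit — is a common fixed point: the group permutes the orbit by isometries, so it preserves
the circumradius function `r`, hence its set of minimizers. Uniform convexity at the midpoint
of a geodesic gives `r(m)^p ≤ (r(x)^p + r(z)^p)/2 - (c/4) d(x,z)^p`, which forces minimizing
sequences of `r^p` to be Cauchy (so by completeness the minimum is attained) and any two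
minimizers to coincide. -/

open Set

open Filter Topology

section Circumradius

variable {Y : Type*} [PseudoMetricSpace Y] {A : Set Y}

/-- Junk value `0` unless `A` is bounded and nonempty. -/
noncomputable def circumradius (A : Set Y) (x : Y) : ℝ :=
  sSup (dist x '' A)

theorem dist_le_circumradius (hA : Bornology.IsBounded A) (x : Y) {a : Y} (ha : a ∈ A) :
    dist x a ≤ circumradius A x := by
  obtain ⟨R, hR⟩ := (Metric.isBounded_iff_subset_closedBall x).mp hA
  refine le_csSup ⟨R, ?_⟩ (mem_image_of_mem _ ha)
  rintro _ ⟨b, hb, rfl⟩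
  simpa [dist_comm] using hR hb

theorem circumradius_le (hne : A.Nonempty) {x : Y} {B : ℝ} (h : ∀ a ∈ A, dist x a ≤ B) :
    circumradius A x ≤ B :=
  csSup_le (hne.image _) (forall_mem_image.mpr h)

theorem circumradius_nonneg (x : Y) : 0 ≤ circumradius A x :=
  Real.sSup_nonneg (forall_mem_image.mpr fun _ _ => dist_nonneg)

theorem lipschitzWith_circumradius (hA : Bornology.IsBounded A) (hne : A.Nonempty) :
    LipschitzWith 1 (circumradius A) :=
  LipschitzWith.of_le_add fun x y => circumradius_le hne fun a ha =>
    calc dist x a ≤ dist x y + dist y a := dist_triangle x y a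
      _ ≤ circumradius A y + dist x y := by linarith [dist_le_circumradius hA y ha]

theorem circumradius_apply_isometry {f : Y → Y} (hf : Isometry f) (hfA : f '' A = A) (x : Y) :
    circumradius A (f x) = circumradius A x := by
  conv_lhs => rw [circumradius, ← hfA, image_image]
  simp only [hf.dist_eq, circumradius]

theorem circumradius_rpow_le (hne : A.Nonempty) {p B : ℝ} (hp : 0 < p) {x : Y}
    (h : ∀ a ∈ A, dist x a ^ p ≤ B) : circumradius A x ^ p ≤ B := by
  have hB : 0 ≤ B := (Real.rpow_nonneg dist_nonneg p).trans (h _ hne.some_mem)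
  have : circumradius A x ≤ B ^ p⁻¹ := circumradius_le hne fun a ha =>
    (Real.le_rpow_inv_iff_of_pos dist_nonneg hB hp).mpr (h a ha)
  exact (Real.le_rpow_inv_iff_of_pos (circumradius_nonneg x) hB hp).mp this

end Circumradius

section Minimizer

variable {Y : Type*} [MetricSpace Y] {F : Y → ℝ} {k p : ℝ}

theorem cauchySeq_of_midpoint_ineq (hbdd : BddBelow (range F)) (hk : 0 < k) (hp : 0 < p)
    (hmid : ∀ x z, ∃ m, k * dist x z ^ p ≤ (F x + F z) / 2 - F m) {u : ℕ → Y}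
    (hu : Tendsto (fun n => F (u n)) atTop (𝓝 (sInf (range F)))) : CauchySeq u := by
  refine Metric.cauchySeq_iff'.mpr fun ε hε => ?_
  have hδ : 0 < k * ε ^ p := mul_pos hk (Real.rpow_pos_of_pos hε p)
  obtain ⟨N, hN⟩ := eventually_atTop.mp
    (hu.eventually (gt_mem_nhds (lt_add_of_pos_right (sInf (range F)) hδ)))
  refine ⟨N, fun n hn => ?_⟩
  obtain ⟨m, hm⟩ := hmid (u n) (u N)
  have : k * dist (u n) (u N) ^ p < k * ε ^ p := by
    linarith [hN n hn, hN N le_rfl, csInf_le hbdd (mem_range_self m)]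
  exact (Real.rpow_lt_rpow_iff dist_nonneg hε.le hp).mp (lt_of_mul_lt_mul_left this hk.le)

theorem exists_unique_forall_le_of_midpoint_ineq [Nonempty Y] [CompleteSpace Y]
    (hF : Continuous F) (hbdd : BddBelow (range F)) (hk : 0 < k) (hp : 0 < p)
    (hmid : ∀ x z, ∃ m, k * dist x z ^ p ≤ (F x + F z) / 2 - F m) :
    ∃! x, ∀ y, F x ≤ F y := by
  obtain ⟨v, -, hv, hvF⟩ := exists_seq_tendsto_sInf (range_nonempty F) hbdd
  choose u hu using hvF
  have hFu : Tendsto (fun n => F (u n)) atTop (𝓝 (sInf (range F))) := by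
    simpa only [hu] using hv
  obtain ⟨x, hx⟩ := cauchySeq_tendsto_of_complete (cauchySeq_of_midpoint_ineq hbdd hk hp hmid hFu)
  have hFx : F x = sInf (range F) := tendsto_nhds_unique ((hF.tendsto x).comp hx) hFu
  have hmin : ∀ y, F x ≤ F y := fun y => hFx ▸ csInf_le hbdd (mem_range_self y)
  refine ⟨x, hmin, fun z hz => dist_le_zero.mp (not_lt.mp fun hpos => ?_)⟩
  obtain ⟨m, hm⟩ := hmid z x
  nlinarith [hz m, hmin m, Real.rpow_pos_of_pos hpos p]

end Minimizer

section UniformlyConvex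

variable {Y : Type*} [MetricSpace Y] {p c : ℝ} {A : Set Y}

theorem PUnifConvex.circumradius_rpow_midpoint_le (hconv : PUnifConvex Y p c) (hp : 0 < p)
    (hA : Bornology.IsBounded A) (hne : A.Nonempty) {x z : Y} {γ : ℝ → Y}
    (hγ : IsGeodesicSeg γ x z) :
    circumradius A (γ (1 / 2)) ^ p ≤
      (circumradius A x ^ p + circumradius A z ^ p) / 2 - c / 4 * dist x z ^ p := by
  refine circumradius_rpow_le hne hp fun a ha => ?_
  have hx := Real.rpow_le_rpow dist_nonneg (dist_le_circumradius hA x ha) hp.le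
  have hz := Real.rpow_le_rpow dist_nonneg (dist_le_circumradius hA z ha) hp.le
  have hmid := hconv a x z γ hγ (1 / 2) ⟨by norm_num, by norm_num⟩
  rw [dist_comm x a] at hx
  rw [dist_comm z a] at hz
  rw [dist_comm]
  linarith

theorem PUnifConvex.exists_unique_circumcenter [CompleteSpace Y] (hgeo : GeodesicSpace Y)
    (hconv : PUnifConvex Y p c) (hp : 0 < p) (hc : 0 < c) (hA : Bornology.IsBounded A)
    (hne : A.Nonempty) : ∃! x, ∀ y, circumradius A x ≤ circumradius A y := by
  have : Nonempty Y := ⟨hne.some⟩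
  have hmono (x y : Y) : circumradius A x ^ p ≤ circumradius A y ^ p ↔
      circumradius A x ≤ circumradius A y :=
    Real.rpow_le_rpow_iff (circumradius_nonneg x) (circumradius_nonneg y) hp
  simp only [← hmono]
  refine exists_unique_forall_le_of_midpoint_ineq
    ((lipschitzWith_circumradius hA hne).continuous.rpow_const fun _ => Or.inr hp.le)
    ⟨0, forall_mem_range.mpr fun x => Real.rpow_nonneg (circumradius_nonneg x) p⟩
    (by positivity : 0 < c / 4) hp fun x z => ?_
  obtain ⟨γ, hγ⟩ := hgeo x z
  exact ⟨γ (1 / 2), by linarith [hconv.circumradius_rpow_midpoint_le hp hA hne hγ]⟩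

end UniformlyConvex

/-- Bruhat's lemma: if a group acts by isometries on a uniformly convex complete geodesic
metric space and some orbit is bounded, then there is a common fixed point. -/
theorem stmt4 {Y : Type*} [MetricSpace Y] [CompleteSpace Y]
    (hgeo : GeodesicSpace Y)
    (hconv : ∃ p c : ℝ, 2 ≤ p ∧ 0 < c ∧ PUnifConvex Y p c)
    {G : Type*} [Group G] [MulAction G Y]
    (hiso : ∀ g : G, Isometry fun y : Y => g • y)
    (hbdd : ∃ y : Y, Bornology.IsBounded (MulAction.orbit G y)) :
    ∃ y : Y, ∀ g : G, g • y = y := by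
  obtain ⟨p, c, hp, hc, hconv⟩ := hconv
  obtain ⟨y₀, hA⟩ := hbdd
  set A := MulAction.orbit G y₀
  obtain ⟨x, hx, huniq⟩ :=
    hconv.exists_unique_circumcenter hgeo (by linarith) hc hA (MulAction.nonempty_orbit y₀)
  have hinv (g : G) : circumradius A (g • x) = circumradius A x :=
    circumradius_apply_isometry (hiso g) (by rw [image_smul, MulAction.smul_orbit]) x
  exact ⟨x, fun g => huniq _ fun y => (hinv g).symm ▸ hx y⟩
end

section
/- (Matoušek extrapolation) Let (V,μ,ν) be a finite reversible Markov chain: V a finite set, ν a probability measure on V, μ(u→·) transition probabilities with ν(u)μ(u→v) = ν(v)μ(v→u). Suppose for exponent p ≥ 1 and constant A>0 every f: V → ℝ satisfies ∑_{u,v} ν(u)ν(v)|f(u)−f(v)|^p ≤ (Ap)^p ∑_{u,v} ν(u)μ(u→v)|f(u)−f(v)|^p. Then for every q ≥ p, every f: V → ℝ satisfies ∑_{u,v} ν(u)ν(v)|f(u)−f(v)|^q ≤ (4Aq)^q ∑_{u,v} ν(u)μ(u→v)|f(u)−f(v)|^q. -/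
/-!
Split `f` at a median `m` into `g = (f - m)⁺` and `h = (f - m)⁻`. Both are nonnegative, vanish on
a set of `ν`-mass at least `1 / 2`, and `|f u - f v| = |g u - g v| + |h u - h v|`; by convexity
this costs a factor `2 ^ (q - 1)` on the left-hand side and nothing on the right-hand side.

For such a `g`, apply the `p`-inequality to `g ^ (q / p)` and bound
`|g u ^ (q / p) - g v ^ (q / p)|` by `(q / p) * max (g u) (g v) ^ (q / p - 1) * |g u - g v|`.
Hölder with exponents `q / p` and `q / (q - p)` leaves the factor
`∑ ν u * μ u v * max (g u) (g v) ^ q`, which reversibility bounds by `2 * ∑ ν v * g v ^ q`, and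
since `g` vanishes on half of the mass, `∑ ν v * g v ^ q` is at most the left-hand side itself.
Absorbing this power of the left-hand side gives the constant `(A * q) ^ q * 2 ^ (q / p - 1)`.
-/

open Finset Real

lemma abs_sub_eq_abs_posPart_sub_add_abs_negPart_sub (a b : ℝ) :
    |a - b| = |a⁺ - b⁺| + |a⁻ - b⁻| := by
  rcases le_total 0 a with ha | ha <;> rcases le_total 0 b with hb | hb <;> simp [*] <;> grind

lemma add_rpow_le_two_rpow_mul {x y p : ℝ} (hx : 0 ≤ x) (hy : 0 ≤ y) (hp : 1 ≤ p) :
    (x + y) ^ p ≤ 2 ^ (p - 1) * (x ^ p + y ^ p) := by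
  lift x to NNReal using hx
  lift y to NNReal using hy
  exact_mod_cast NNReal.rpow_add_le_mul_rpow_add_rpow x y hp

lemma abs_sub_rpow_le_abs_rpow_sub_rpow {a b α : ℝ} (ha : 0 ≤ a) (hb : 0 ≤ b) (hα : 1 ≤ α) :
    |a - b| ^ α ≤ |a ^ α - b ^ α| := by
  wlog hba : b ≤ a generalizing a b
  · rw [abs_sub_comm, abs_sub_comm (a ^ α)]
    exact this hb ha (le_of_not_ge hba)
  have hmono : b ^ α ≤ a ^ α := rpow_le_rpow hb hba (by linarith)
  have := add_rpow_le_rpow_add (sub_nonneg.2 hba) hb hα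
  rw [sub_add_cancel] at this
  rw [abs_of_nonneg (sub_nonneg.2 hba), abs_of_nonneg (sub_nonneg.2 hmono)]
  linarith

lemma rpow_sub_rpow_le_mul_rpow_mul_sub {a b α : ℝ} (hb : 0 ≤ b) (hba : b ≤ a) (hα : 1 ≤ α) :
    a ^ α - b ^ α ≤ α * a ^ (α - 1) * (a - b) := by
  obtain rfl | ha := (hb.trans hba).eq_or_lt
  · simp [le_antisymm hba hb, zero_rpow (by linarith : α ≠ 0)]
  -- Bernoulli's inequality at `b / a - 1`, multiplied by `a ^ α`
  have hbern := one_add_mul_self_le_rpow_one_add (s := b / a - 1)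
    (by linarith [div_nonneg hb ha.le]) hα
  rw [add_sub_cancel, div_rpow hb ha.le, le_div_iff₀ (rpow_pos_of_pos ha α)] at hbern
  have hpow : a ^ α = a ^ (α - 1) * a := by rw [← rpow_add_one ha.ne', sub_add_cancel]
  rw [hpow] at hbern ⊢
  have : (1 + α * (b / a - 1)) * (a ^ (α - 1) * a) =
      a ^ (α - 1) * a + α * a ^ (α - 1) * (b - a) := by
    field_simp
  linarith

lemma abs_rpow_sub_rpow_le {a b α : ℝ} (ha : 0 ≤ a) (hb : 0 ≤ b) (hα : 1 ≤ α) :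
    |a ^ α - b ^ α| ≤ α * max a b ^ (α - 1) * |a - b| := by
  wlog hba : b ≤ a generalizing a b
  · rw [abs_sub_comm, abs_sub_comm a, max_comm]
    exact this hb ha (le_of_not_ge hba)
  rw [abs_of_nonneg (sub_nonneg.2 (rpow_le_rpow hb hba (by linarith))),
    abs_of_nonneg (sub_nonneg.2 hba), max_eq_left hba]
  exact rpow_sub_rpow_le_mul_rpow_mul_sub hb hba hα

lemma abs_rpow_sub_rpow_rpow_le {a b p q : ℝ} (ha : 0 ≤ a) (hb : 0 ≤ b) (hp : 0 < p)
    (hpq : p ≤ q) :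
    |a ^ (q / p) - b ^ (q / p)| ^ p ≤
      (q / p) ^ p * ((|a - b| ^ q) ^ (p / q) * (max a b ^ q) ^ (1 - p / q)) := by
  have hq : 0 < q := hp.trans_le hpq
  have hM : 0 ≤ max a b := le_max_of_le_left ha
  calc |a ^ (q / p) - b ^ (q / p)| ^ p
      ≤ (q / p * max a b ^ (q / p - 1) * |a - b|) ^ p :=
        rpow_le_rpow (abs_nonneg _) (abs_rpow_sub_rpow_le ha hb ((one_le_div hp).2 hpq)) hp.le
    _ = (q / p) ^ p * ((|a - b| ^ q) ^ (p / q) * (max a b ^ q) ^ (1 - p / q)) := by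
        rw [mul_rpow (by positivity) (abs_nonneg _), mul_rpow (by positivity) (by positivity),
          ← rpow_mul hM, ← rpow_mul hM, ← rpow_mul (abs_nonneg _)]
        have e1 : (q / p - 1) * p = q * (1 - p / q) := by field_simp
        have e2 : q * (p / q) = p := by field_simp
        rw [e1, e2]
        ring

lemma sum_mul_rpow_mul_rpow_le {ι : Type*} (s : Finset ι) {θ : ℝ} (hθ₀ : 0 < θ) (hθ₁ : θ ≤ 1)
    {w a b : ι → ℝ} (hw : ∀ i, 0 ≤ w i) (ha : ∀ i, 0 ≤ a i) (hb : ∀ i, 0 ≤ b i) :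
    ∑ i ∈ s, w i * (a i ^ θ * b i ^ (1 - θ)) ≤
      (∑ i ∈ s, w i * a i) ^ θ * (∑ i ∈ s, w i * b i) ^ (1 - θ) := by
  obtain rfl | hθ₁ := hθ₁.eq_or_lt
  · simp
  have hθ' : 0 < 1 - θ := by linarith
  have hconj : θ⁻¹.HolderConjugate (1 - θ)⁻¹ :=
    (Real.holderConjugate_iff).2 ⟨(one_lt_inv₀ hθ₀).2 hθ₁, by simp⟩
  have hH := inner_le_Lp_mul_Lq_of_nonneg s hconj (f := fun i => (w i * a i) ^ θ)
    (g := fun i => (w i * b i) ^ (1 - θ)) (fun i _ => by have := hw i; have := ha i; positivity)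
    (fun i _ => by have := hw i; have := hb i; positivity)
  have hprod : ∀ i, (w i * a i) ^ θ * (w i * b i) ^ (1 - θ) = w i * (a i ^ θ * b i ^ (1 - θ)) := by
    intro i
    rw [mul_rpow (hw i) (ha i), mul_rpow (hw i) (hb i), mul_mul_mul_comm,
      ← rpow_add' (hw i) (by simp), add_sub_cancel, rpow_one]
  have ha' : ∀ i, ((w i * a i) ^ θ) ^ θ⁻¹ = w i * a i := fun i =>
    rpow_rpow_inv (mul_nonneg (hw i) (ha i)) hθ₀.ne'
  have hb' : ∀ i, ((w i * b i) ^ (1 - θ)) ^ (1 - θ)⁻¹ = w i * b i := fun i =>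
    rpow_rpow_inv (mul_nonneg (hw i) (hb i)) hθ'.ne'
  simpa only [hprod, ha', hb', one_div, inv_inv] using hH

lemma le_rpow_inv_mul_of_le_mul_rpow_mul_rpow {x y c θ : ℝ} (hx : 0 ≤ x) (hy : 0 ≤ y)
    (hc : 0 ≤ c) (hθ : 0 < θ) (h : x ≤ c * y ^ θ * x ^ (1 - θ)) : x ≤ c ^ θ⁻¹ * y := by
  obtain rfl | hx := hx.eq_or_lt
  · positivity
  have hxθ : x ^ θ ≤ c * y ^ θ := by
    refine le_of_mul_le_mul_right ?_ (rpow_pos_of_pos hx (1 - θ))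
    rwa [← rpow_add hx, add_sub_cancel, rpow_one]
  calc x = (x ^ θ) ^ θ⁻¹ := (rpow_rpow_inv hx.le hθ.ne').symm
    _ ≤ (c * y ^ θ) ^ θ⁻¹ := rpow_le_rpow (by positivity) hxθ (by positivity)
    _ = c ^ θ⁻¹ * y := by rw [mul_rpow hc (by positivity), rpow_rpow_inv hy hθ.ne']

lemma two_rpow_mul_rpow_mul_two_rpow_le {p q A : ℝ} (hp : 1 ≤ p) (hpq : p ≤ q) (hA : 0 ≤ A) :
    2 ^ (q - 1) * ((A * q) ^ q * 2 ^ (q / p - 1)) ≤ (4 * A * q) ^ q := by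
  have hq : 0 ≤ q := by linarith
  have hexp : q - 1 + (q / p - 1) ≤ 2 * q := by linarith [div_le_self hq hp]
  calc 2 ^ (q - 1) * ((A * q) ^ q * 2 ^ (q / p - 1))
      = (A * q) ^ q * 2 ^ (q - 1 + (q / p - 1)) := by rw [rpow_add two_pos]; ring
    _ ≤ (A * q) ^ q * 2 ^ (2 * q) := by gcongr; norm_num
    _ = (4 * A * q) ^ q := by
      rw [show (4 : ℝ) * A * q = 2 ^ (2 : ℝ) * (A * q) by norm_num; ring,
        mul_rpow (x := 2 ^ (2 : ℝ)) (by positivity) (by positivity), ← rpow_mul zero_le_two,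
        mul_comm]

section Energy

variable {V : Type*} [Fintype V]

noncomputable def energy (w : V → V → ℝ) (q : ℝ) (f : V → ℝ) : ℝ :=
  ∑ u, ∑ v, w u v * |f u - f v| ^ q

variable {w : V → V → ℝ} {p q : ℝ} {f g h : V → ℝ}

lemma energy_nonneg (hw : ∀ u v, 0 ≤ w u v) : 0 ≤ energy w q f :=
  sum_nonneg fun u _ => sum_nonneg fun v _ => mul_nonneg (hw u v) (rpow_nonneg (abs_nonneg _) q)

lemma energy_le_two_rpow_mul_add (hw : ∀ u v, 0 ≤ w u v) (hq : 1 ≤ q)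
    (hfgh : ∀ u v, |f u - f v| = |g u - g v| + |h u - h v|) :
    energy w q f ≤ 2 ^ (q - 1) * (energy w q g + energy w q h) := by
  simp only [energy, mul_add, mul_sum, ← sum_add_distrib]
  gcongr with u _ v _
  calc w u v * |f u - f v| ^ q
      ≤ w u v * (2 ^ (q - 1) * (|g u - g v| ^ q + |h u - h v| ^ q)) := by
        rw [hfgh]
        exact mul_le_mul_of_nonneg_left
          (add_rpow_le_two_rpow_mul (abs_nonneg _) (abs_nonneg _) hq) (hw u v)
    _ = _ := by ring

lemma energy_add_le (hw : ∀ u v, 0 ≤ w u v) (hq : 1 ≤ q)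
    (hfgh : ∀ u v, |f u - f v| = |g u - g v| + |h u - h v|) :
    energy w q g + energy w q h ≤ energy w q f := by
  simp only [energy, ← sum_add_distrib, ← mul_add]
  gcongr with u _ v _
  · exact hw u v
  rw [hfgh]
  exact add_rpow_le_rpow_add (abs_nonneg _) (abs_nonneg _) hq

lemma energy_le_energy_rpow_div (hw : ∀ u v, 0 ≤ w u v) (hp : 0 < p) (hpq : p ≤ q)
    (hf : ∀ v, 0 ≤ f v) : energy w q f ≤ energy w p fun v => f v ^ (q / p) := by
  refine sum_le_sum fun u _ => sum_le_sum fun v _ => mul_le_mul_of_nonneg_left ?_ (hw u v)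
  calc |f u - f v| ^ q = (|f u - f v| ^ (q / p)) ^ p := by
        rw [← rpow_mul (abs_nonneg _), div_mul_cancel₀ q hp.ne']
    _ ≤ |f u ^ (q / p) - f v ^ (q / p)| ^ p := rpow_le_rpow (by positivity)
        (abs_sub_rpow_le_abs_rpow_sub_rpow (hf u) (hf v) ((one_le_div hp).2 hpq)) hp.le

lemma energy_rpow_div_le (hw : ∀ u v, 0 ≤ w u v) (hp : 0 < p) (hpq : p ≤ q)
    (hf : ∀ v, 0 ≤ f v) :
    energy w p (fun v => f v ^ (q / p)) ≤ (q / p) ^ p *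
      (energy w q f ^ (p / q) * (∑ u, ∑ v, w u v * max (f u) (f v) ^ q) ^ (1 - p / q)) := by
  have hq : 0 < q := hp.trans_le hpq
  have hholder := sum_mul_rpow_mul_rpow_le univ (div_pos hp hq) (div_le_one_of_le₀ hpq hq.le)
    (w := fun x : V × V => w x.1 x.2)
    (a := fun x => |f x.1 - f x.2| ^ q) (b := fun x => max (f x.1) (f x.2) ^ q)
    (fun x => hw _ _) (fun x => rpow_nonneg (abs_nonneg _) q)
    (fun x => rpow_nonneg (le_max_of_le_left (hf _)) q)
  simp only [Fintype.sum_prod_type] at hholder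
  refine le_trans ?_ (mul_le_mul_of_nonneg_left hholder (rpow_nonneg (div_pos hq hp).le p))
  simp only [energy, mul_sum]
  refine sum_le_sum fun u _ => sum_le_sum fun v _ => ?_
  rw [mul_left_comm]
  exact mul_le_mul_of_nonneg_left (abs_rpow_sub_rpow_rpow_le (hf u) (hf v) hp hpq) (hw u v)

end Energy

section ReversibleChain

variable {V : Type*} [Fintype V] {ν : V → ℝ} {μ : V → V → ℝ}

lemma exists_median (hν : ∀ u, 0 ≤ ν u) (hν1 : ∑ u, ν u = 1) (f : V → ℝ) :
    ∃ m, 1 / 2 ≤ ∑ v with f v ≤ m, ν v ∧ 1 / 2 ≤ ∑ v with m ≤ f v, ν v := by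
  have hne : (univ : Finset V).Nonempty := by
    by_contra h
    simp_all [not_nonempty_iff_eq_empty]
  obtain ⟨u₀, -, hu₀⟩ := univ.exists_max_image f hne
  -- `m` is the least value of `f` at which the distribution function reaches `1 / 2`
  have hS : ({u | 1 / 2 ≤ ∑ v with f v ≤ f u, ν v} : Finset V).Nonempty := by
    refine ⟨u₀, mem_filter.2 ⟨mem_univ _, ?_⟩⟩
    rw [filter_true_of_mem fun v _ => hu₀ v (mem_univ v), hν1]
    norm_num
  obtain ⟨u₁, hu₁, hmin⟩ := exists_min_image _ f hS
  refine ⟨f u₁, (mem_filter.1 hu₁).2, ?_⟩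
  have hbelow : ∑ v with f v < f u₁, ν v ≤ 1 / 2 := by
    obtain hempty | hbelow := ({v | f v < f u₁} : Finset V).eq_empty_or_nonempty
    · rw [hempty, sum_empty]; norm_num
    obtain ⟨w, hw, hwmax⟩ := exists_max_image _ f hbelow
    have hwS : ∑ v with f v ≤ f w, ν v < 1 / 2 := by
      by_contra! h
      have := hmin w (mem_filter.2 ⟨mem_univ _, h⟩)
      linarith [(mem_filter.1 hw).2]
    refine le_trans (sum_le_sum_of_subset_of_nonneg ?_ fun v _ _ => hν v) hwS.le
    exact fun v hv => mem_filter.2 ⟨mem_univ _, hwmax v hv⟩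
  have hsplit := sum_filter_add_sum_filter_not univ (fun v => f u₁ ≤ f v) ν
  simp only [not_le, hν1] at hsplit
  linarith

lemma exists_split_vanishing_on_half (hν : ∀ u, 0 ≤ ν u) (hν1 : ∑ u, ν u = 1) (f : V → ℝ) :
    ∃ g h : V → ℝ, (∀ v, 0 ≤ g v) ∧ (∀ v, 0 ≤ h v) ∧
      1 / 2 ≤ ∑ v with g v = 0, ν v ∧ 1 / 2 ≤ ∑ v with h v = 0, ν v ∧
      ∀ u v, |f u - f v| = |g u - g v| + |h u - h v| := by
  obtain ⟨m, hlow, hhigh⟩ := exists_median hν hν1 f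
  refine ⟨fun v => (f v - m)⁺, fun v => (f v - m)⁻, fun v => posPart_nonneg _,
    fun v => negPart_nonneg _, ?_, ?_, fun u v => ?_⟩
  · exact hlow.trans <| sum_le_sum_of_subset_of_nonneg (fun v => by simp) fun v _ _ => hν v
  · exact hhigh.trans <| sum_le_sum_of_subset_of_nonneg (fun v => by simp) fun v _ _ => hν v
  · rw [← abs_sub_eq_abs_posPart_sub_add_abs_negPart_sub, sub_sub_sub_cancel_right]

lemma sum_mul_eq_of_reversible (hrow : ∀ u, ∑ v, μ u v = 1)
    (hrev : ∀ u v, ν u * μ u v = ν v * μ v u) (v : V) : ∑ u, ν u * μ u v = ν v := by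
  simp only [hrev _ v, ← mul_sum, hrow, mul_one]

lemma sum_sum_mul_max_rpow_le (hν : ∀ u, 0 ≤ ν u) (hμ : ∀ u v, 0 ≤ μ u v)
    (hrow : ∀ u, ∑ v, μ u v = 1) (hrev : ∀ u v, ν u * μ u v = ν v * μ v u)
    (q : ℝ) {f : V → ℝ} (hf : ∀ v, 0 ≤ f v) :
    ∑ u, ∑ v, ν u * μ u v * max (f u) (f v) ^ q ≤ 2 * ∑ v, ν v * f v ^ q := by
  have hmax : ∀ u v, max (f u) (f v) ^ q ≤ f u ^ q + f v ^ q := by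
    intro u v
    rcases max_choice (f u) (f v) with h | h <;> rw [h]
    · exact le_add_of_nonneg_right (rpow_nonneg (hf v) q)
    · exact le_add_of_nonneg_left (rpow_nonneg (hf u) q)
  calc ∑ u, ∑ v, ν u * μ u v * max (f u) (f v) ^ q
      ≤ ∑ u, ∑ v, (ν u * μ u v * f u ^ q + ν u * μ u v * f v ^ q) := by
        refine sum_le_sum fun u _ => sum_le_sum fun v _ => ?_
        rw [← mul_add]
        exact mul_le_mul_of_nonneg_left (hmax u v) (mul_nonneg (hν u) (hμ u v))
    _ = ∑ u, ν u * f u ^ q * ∑ v, μ u v + ∑ v, (∑ u, ν u * μ u v) * f v ^ q := by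
        simp only [sum_add_distrib, mul_sum, sum_mul]
        congr 1
        · exact sum_congr rfl fun _ _ => sum_congr rfl fun _ _ => by ring
        · exact sum_comm
    _ = 2 * ∑ v, ν v * f v ^ q := by
        simp only [hrow, sum_mul_eq_of_reversible hrow hrev, mul_one]
        ring

lemma sum_mul_rpow_le_energy (hν : ∀ u, 0 ≤ ν u) {q : ℝ} (hq : 0 < q) {f : V → ℝ}
    (hf : ∀ v, 0 ≤ f v) (hZ : 1 / 2 ≤ ∑ v with f v = 0, ν v) :
    ∑ v, ν v * f v ^ q ≤ energy (fun u v => ν u * ν v) q f := by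
  set S := ∑ v, ν v * f v ^ q
  set Z : V → ℝ := fun v => if f v = 0 then ν v else 0
  have hZsum : ∑ v with f v = 0, ν v = ∑ v, Z v := sum_filter _ _
  -- a pair with `f v = 0` contributes `ν u * ν v * f u ^ q`, and symmetrically
  have hpair : ∀ u v, ν u * f u ^ q * Z v + Z u * (ν v * f v ^ q) ≤
      ν u * ν v * |f u - f v| ^ q := by
    intro u v
    have := mul_nonneg (mul_nonneg (hν u) (hν v)) (rpow_nonneg (abs_nonneg (f u - f v)) q)
    by_cases hu : f u = 0 <;> by_cases hv : f v = 0 <;>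
      simp [Z, hu, hv, zero_rpow hq.ne', abs_of_nonneg (hf u), abs_of_nonneg (hf v)] <;>
      linarith
  have hS : 0 ≤ S := sum_nonneg fun v _ => mul_nonneg (hν v) (rpow_nonneg (hf v) q)
  calc S ≤ S * (∑ v, Z v) + (∑ v, Z v) * S := by nlinarith
    _ = ∑ u, ∑ v, (ν u * f u ^ q * Z v + Z u * (ν v * f v ^ q)) := by
        simp only [sum_mul_sum, ← sum_add_distrib, S]
    _ ≤ energy (fun u v => ν u * ν v) q f := by
        unfold energy; gcongr with u _ v _; exact hpair u v

lemma energy_le_of_vanishes_on_half (hν : ∀ u, 0 ≤ ν u) (hμ : ∀ u v, 0 ≤ μ u v)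
    (hrow : ∀ u, ∑ v, μ u v = 1) (hrev : ∀ u v, ν u * μ u v = ν v * μ v u)
    {p q A : ℝ} (hp : 0 < p) (hpq : p ≤ q) (hA : 0 ≤ A)
    (hpoin : ∀ g : V → ℝ, energy (fun u v => ν u * ν v) p g ≤
      (A * p) ^ p * energy (fun u v => ν u * μ u v) p g)
    (f : V → ℝ) (hf : ∀ v, 0 ≤ f v) (hZ : 1 / 2 ≤ ∑ v with f v = 0, ν v) :
    energy (fun u v => ν u * ν v) q f ≤
      (A * q) ^ q * 2 ^ (q / p - 1) * energy (fun u v => ν u * μ u v) q f := by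
  have hq : 0 < q := hp.trans_le hpq
  have hνν : ∀ u v, 0 ≤ ν u * ν v := fun u v => mul_nonneg (hν u) (hν v)
  have hνμ : ∀ u v, 0 ≤ ν u * μ u v := fun u v => mul_nonneg (hν u) (hμ u v)
  set E := energy (fun u v => ν u * ν v) q f
  set R := energy (fun u v => ν u * μ u v) q f
  set T := ∑ u, ∑ v, ν u * μ u v * max (f u) (f v) ^ q
  set θ := p / q
  have hθ : 0 < θ := div_pos hp hq
  have hθ₁ : θ ≤ 1 := div_le_one_of_le₀ hpq hq.le
  have hE : 0 ≤ E := energy_nonneg hνν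
  have hR : 0 ≤ R := energy_nonneg hνμ
  have hT₀ : 0 ≤ T := sum_nonneg fun u _ => sum_nonneg fun v _ =>
    mul_nonneg (hνμ u v) (rpow_nonneg (le_max_of_le_left (hf u)) q)
  have hT : T ≤ 2 * E := (sum_sum_mul_max_rpow_le hν hμ hrow hrev q hf).trans
    (by linarith [sum_mul_rpow_le_energy hν hq hf hZ])
  have key : E ≤ (A * q) ^ p * 2 ^ (1 - θ) * R ^ θ * E ^ (1 - θ) := calc
    E ≤ energy (fun u v => ν u * ν v) p fun v => f v ^ (q / p) :=
      energy_le_energy_rpow_div hνν hp hpq hf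
    _ ≤ (A * p) ^ p * energy (fun u v => ν u * μ u v) p fun v => f v ^ (q / p) := hpoin _
    _ ≤ (A * p) ^ p * ((q / p) ^ p * (R ^ θ * T ^ (1 - θ))) := by
      gcongr
      exact energy_rpow_div_le hνμ hp hpq hf
    _ ≤ (A * p) ^ p * ((q / p) ^ p * (R ^ θ * (2 * E) ^ (1 - θ))) := by
      have := rpow_nonneg hR θ
      gcongr
    _ = (A * q) ^ p * 2 ^ (1 - θ) * R ^ θ * E ^ (1 - θ) := by
      rw [mul_rpow zero_le_two hE, ← mul_assoc, ← mul_rpow (by positivity) (by positivity),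
        mul_assoc A, mul_div_cancel₀ q hp.ne']
      ring
  calc E ≤ ((A * q) ^ p * 2 ^ (1 - θ)) ^ θ⁻¹ * R :=
        le_rpow_inv_mul_of_le_mul_rpow_mul_rpow hE hR (by positivity) hθ key
    _ = (A * q) ^ q * 2 ^ (q / p - 1) * R := by
      rw [mul_rpow (by positivity) (by positivity), ← rpow_mul (by positivity),
        ← rpow_mul zero_le_two]
      congr 4 <;> simp only [θ] <;> field_simp

end ReversibleChain

/-- Matoušek extrapolation: if a finite reversible Markov chain satisfies a Poincaré
inequality with exponent `p` and modulus `A·p` for all real-valued functions, then for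
every `q ≥ p` it satisfies the inequality with exponent `q` and modulus `4·A·q`. -/
theorem stmt7 {V : Type*} [Fintype V] (ν : V → ℝ) (μ : V → V → ℝ)
    (hν : ∀ u, 0 ≤ ν u) (hν1 : ∑ u, ν u = 1)
    (hμ : ∀ u v, 0 ≤ μ u v) (hrow : ∀ u, ∑ v, μ u v = 1)
    (hrev : ∀ u v, ν u * μ u v = ν v * μ v u)
    (p A : ℝ) (hp : 1 ≤ p) (hA : 0 < A)
    (hpoin : ∀ f : V → ℝ,
      ∑ u, ∑ v, ν u * ν v * |f u - f v| ^ p ≤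
        (A * p) ^ p * ∑ u, ∑ v, ν u * μ u v * |f u - f v| ^ p) :
    ∀ q : ℝ, p ≤ q → ∀ f : V → ℝ,
      ∑ u, ∑ v, ν u * ν v * |f u - f v| ^ q ≤
        (4 * A * q) ^ q * ∑ u, ∑ v, ν u * μ u v * |f u - f v| ^ q := by
  intro q hpq f
  have hq : 1 ≤ q := hp.trans hpq
  have hνν : ∀ u v, 0 ≤ ν u * ν v := fun u v => mul_nonneg (hν u) (hν v)
  have hνμ : ∀ u v, 0 ≤ ν u * μ u v := fun u v => mul_nonneg (hν u) (hμ u v)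
  obtain ⟨g, h, hg, hh, hgZ, hhZ, hfgh⟩ := exists_split_vanishing_on_half hν hν1 f
  have half := energy_le_of_vanishes_on_half hν hμ hrow hrev (zero_lt_one.trans_le hp) hpq
    hA.le hpoin
  calc energy (fun u v => ν u * ν v) q f
      ≤ 2 ^ (q - 1) * (energy (fun u v => ν u * ν v) q g + energy (fun u v => ν u * ν v) q h) :=
        energy_le_two_rpow_mul_add hνν hq hfgh
    _ ≤ 2 ^ (q - 1) * ((A * q) ^ q * 2 ^ (q / p - 1)) *
          (energy (fun u v => ν u * μ u v) q g + energy (fun u v => ν u * μ u v) q h) := by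
        rw [mul_assoc]
        gcongr
        linarith [half g hg hgZ, half h hh hhZ]
    _ ≤ (4 * A * q) ^ q * energy (fun u v => ν u * μ u v) q f := by
        gcongr
        · exact add_nonneg (energy_nonneg hνμ) (energy_nonneg hνμ)
        · exact two_rpow_mul_rpow_mul_two_rpow_le hp hpq hA.le
        · exact energy_add_le hνμ hq hfgh
end

section
/- Let (V,μ,ν) be a finite reversible Markov chain with ν a probability measure, and let (Y,d) be a metric space. If for some constant c̄>0 and exponent p ≥ 1 every f: V → Y satisfies ∑_{u,v} ν(u)ν(v) d(f(u),f(v))^p ≤ c̄^p ∑_{u,v} ν(u)μ(u→v) d(f(u),f(v))^p, then for every n ≥ 1 and every f: V → Y, ∑_{u,v} ν(u)μ^n(u→v) d(f(u),f(v))^p ≤ (2c̄)^p ∑_{u,v} ν(u)μ(u→v) d(f(u),f(v))^p, where μ^n denotes the n-fold convolution (n-step transition probabilities). -/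
/-!
Insert an independent `ν`-distributed point `w` between the endpoints of an `n`-step transition
`u → v`: by the triangle inequality and convexity of `t ↦ t ^ p`,
`d(f u, f v) ^ p ≤ 2 ^ (p - 1) (d(f u, f w) ^ p + d(f w, f v) ^ p)`.
Since `μⁿ` is stochastic and `ν`-stationary (reversibility), both `(u, w)` and `(w, v)` are then
`ν ⊗ ν`-distributed, so the `n`-step energy is at most `2 ^ p` times the `ν ⊗ ν` energy, which the
Poincaré inequality bounds by `c̄ ^ p` times the one-step energy.
-/

open Finset

/-- The `n`-step transition kernel of a Markov chain on a finite set. -/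
def kpow {V : Type*} [Fintype V] (μ : V → V → ℝ) [DecidableEq V] : ℕ → V → V → ℝ
  | 0 => fun u v => if u = v then 1 else 0
  | n + 1 => fun u v => ∑ w, kpow μ n u w * μ w v

theorem Real.rpow_add_le_mul_rpow_add_rpow {a b p : ℝ} (ha : 0 ≤ a) (hb : 0 ≤ b) (hp : 1 ≤ p) :
    (a + b) ^ p ≤ 2 ^ (p - 1) * (a ^ p + b ^ p) := by
  simpa [ha, hb] using NNReal.coe_le_coe.2 <|
    NNReal.rpow_add_le_mul_rpow_add_rpow a.toNNReal b.toNNReal hp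

theorem dist_rpow_le_mul_add {Y : Type*} [PseudoMetricSpace Y] {p : ℝ} (hp : 1 ≤ p) (x y z : Y) :
    dist x z ^ p ≤ 2 ^ (p - 1) * (dist x y ^ p + dist y z ^ p) :=
  (Real.rpow_le_rpow dist_nonneg (dist_triangle x y z) (zero_le_one.trans hp)).trans
    (Real.rpow_add_le_mul_rpow_add_rpow dist_nonneg dist_nonneg hp)

section Kernel

variable {V : Type*} [Fintype V] (ν : V → ℝ) {K : V → V → ℝ}

theorem sum_sum_mul_kernel_left (hrow : ∀ u, ∑ v, K u v = 1) (a : V → ℝ) :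
    ∑ u, ∑ v, ν u * K u v * a u = ∑ u, ν u * a u := by
  refine sum_congr rfl fun u _ => ?_
  rw [← sum_mul, ← mul_sum, hrow, mul_one]

theorem sum_sum_mul_kernel_right (hstat : ∀ v, ∑ u, ν u * K u v = ν v) (b : V → ℝ) :
    ∑ u, ∑ v, ν u * K u v * b v = ∑ v, ν v * b v := by
  rw [sum_comm]
  exact sum_congr rfl fun v _ => by rw [← sum_mul, hstat]

theorem sum_mul_kernel_eq_of_reversible (hrow : ∀ u, ∑ v, K u v = 1)
    (hrev : ∀ u v, ν u * K u v = ν v * K v u) (v : V) :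
    ∑ u, ν u * K u v = ν v := by
  simp_rw [hrev _ v, ← mul_sum, hrow, mul_one]

variable [DecidableEq V]

theorem kpow_nonneg (hK : ∀ u v, 0 ≤ K u v) (n : ℕ) (u v : V) : 0 ≤ kpow K n u v := by
  induction n generalizing v with
  | zero => unfold kpow; positivity
  | succ n ih => exact sum_nonneg fun w _ => mul_nonneg (ih w) (hK w v)

theorem sum_kpow_eq_one (hrow : ∀ u, ∑ v, K u v = 1) (n : ℕ) (u : V) :
    ∑ v, kpow K n u v = 1 := by
  induction n with
  | zero => simp [kpow]
  | succ n ih =>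
    simp only [kpow]
    rw [sum_comm]
    simp_rw [← mul_sum, hrow, mul_one, ih]

theorem sum_mul_kpow_eq (hstat : ∀ v, ∑ u, ν u * K u v = ν v) (n : ℕ) (v : V) :
    ∑ u, ν u * kpow K n u v = ν v := by
  induction n generalizing v with
  | zero => simp [kpow]
  | succ n ih =>
    simp only [kpow, mul_sum, ← mul_assoc]
    rw [sum_comm]
    simp_rw [← sum_mul, ih, hstat]

end Kernel

theorem sum_kernel_dist_rpow_le {V Y : Type*} [Fintype V] [PseudoMetricSpace Y]
    {ν : V → ℝ} {K : V → V → ℝ} (hν : ∀ u, 0 ≤ ν u) (hν1 : ∑ u, ν u = 1)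
    (hK : ∀ u v, 0 ≤ K u v) (hrow : ∀ u, ∑ v, K u v = 1)
    (hstat : ∀ v, ∑ u, ν u * K u v = ν v) {p : ℝ} (hp : 1 ≤ p) (f : V → Y) :
    ∑ u, ∑ v, ν u * K u v * dist (f u) (f v) ^ p ≤
      2 ^ p * ∑ u, ∑ v, ν u * ν v * dist (f u) (f v) ^ p := by
  set d : V → V → ℝ := fun u v => dist (f u) (f v) ^ p
  set E := ∑ u, ∑ v, ν u * ν v * d u v
  let a : V → ℝ := fun u => ∑ w, ν w * d u w
  let b : V → ℝ := fun v => ∑ w, ν w * d w v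
  have hpoint : ∀ u v, d u v ≤ 2 ^ (p - 1) * (a u + b v) := fun u v =>
    calc d u v = ∑ w, ν w * d u v := by rw [← sum_mul, hν1, one_mul]
      _ ≤ ∑ w, ν w * (2 ^ (p - 1) * (d u w + d w v)) :=
        sum_le_sum fun w _ => mul_le_mul_of_nonneg_left (dist_rpow_le_mul_add hp _ _ _) (hν w)
      _ = 2 ^ (p - 1) * (a u + b v) := by
        simp only [a, b, mul_sum, ← sum_add_distrib]
        exact sum_congr rfl fun w _ => by ring
  have hb : ∑ v, ν v * b v = E := by
    simp only [b, E, mul_sum]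
    rw [sum_comm]
    exact sum_congr rfl fun w _ => sum_congr rfl fun v _ => by ring
  calc ∑ u, ∑ v, ν u * K u v * d u v
      ≤ ∑ u, ∑ v, 2 ^ (p - 1) * (ν u * K u v * a u + ν u * K u v * b v) :=
        sum_le_sum fun u _ => sum_le_sum fun v _ => by
          rw [← mul_add, mul_left_comm]
          exact mul_le_mul_of_nonneg_left (hpoint u v) (mul_nonneg (hν u) (hK u v))
    _ = 2 ^ (p - 1) * (∑ u, ν u * a u + ∑ v, ν v * b v) := by
        simp only [← mul_sum, sum_add_distrib, sum_sum_mul_kernel_left ν hrow,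
          sum_sum_mul_kernel_right ν hstat]
    _ = 2 ^ p * E := by
        rw [hb, show ∑ u, ν u * a u = E by simp only [a, E, mul_sum, mul_assoc], ← two_mul,
          ← mul_assoc, ← Real.rpow_add_one two_ne_zero, sub_add_cancel]

/-- If a finite reversible Markov chain satisfies the Poincaré inequality
`∑ ν(u)ν(v) d(f(u),f(v))^p ≤ c̄^p ∑ ν(u)μ(u→v) d(f(u),f(v))^p` for all `f : V → Y`,
then for every `n ≥ 1` the `n`-step energy is controlled:
`∑ ν(u)μⁿ(u→v) d(f(u),f(v))^p ≤ (2c̄)^p ∑ ν(u)μ(u→v) d(f(u),f(v))^p`. -/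
theorem stmt8 {V : Type*} [Fintype V] [DecidableEq V] {Y : Type*} [MetricSpace Y]
    (ν : V → ℝ) (μ : V → V → ℝ)
    (hν : ∀ u, 0 ≤ ν u) (hν1 : ∑ u, ν u = 1)
    (hμ : ∀ u v, 0 ≤ μ u v) (hrow : ∀ u, ∑ v, μ u v = 1)
    (hrev : ∀ u v, ν u * μ u v = ν v * μ v u)
    (p cbar : ℝ) (hp : 1 ≤ p) (hc : 0 < cbar)
    (hpoin : ∀ f : V → Y,
      ∑ u, ∑ v, ν u * ν v * dist (f u) (f v) ^ p ≤
        cbar ^ p * ∑ u, ∑ v, ν u * μ u v * dist (f u) (f v) ^ p) :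
    ∀ n : ℕ, 1 ≤ n → ∀ f : V → Y,
      ∑ u, ∑ v, ν u * kpow μ n u v * dist (f u) (f v) ^ p ≤
        (2 * cbar) ^ p * ∑ u, ∑ v, ν u * μ u v * dist (f u) (f v) ^ p := by
  intro n _ f
  have hstat := sum_mul_kpow_eq ν (sum_mul_kernel_eq_of_reversible ν hrow hrev) n
  calc ∑ u, ∑ v, ν u * kpow μ n u v * dist (f u) (f v) ^ p
      ≤ 2 ^ p * ∑ u, ∑ v, ν u * ν v * dist (f u) (f v) ^ p :=
        sum_kernel_dist_rpow_le hν hν1 (kpow_nonneg hμ n) (sum_kpow_eq_one hrow n) hstat hp f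
    _ ≤ 2 ^ p * (cbar ^ p * ∑ u, ∑ v, ν u * μ u v * dist (f u) (f v) ^ p) :=
        mul_le_mul_of_nonneg_left (hpoin f) (by positivity)
    _ = (2 * cbar) ^ p * ∑ u, ∑ v, ν u * μ u v * dist (f u) (f v) ^ p := by
        rw [Real.mul_rpow zero_le_two hc.le, mul_assoc]
end

section
/- Let (X,d) be a metric space with Nagata dimension at most d with constant γ (γ > Nagata constant). Then for every k ∈ ℤ, X admits a 2^k-bounded (1/(100·γ·d²), 1/(d+1))-padded stochastic decomposition. -/
open Finset

open Classical in
/-- A `Δ`-bounded `(ε,δ)`-padded stochastic decomposition of a metric space `X`, modeled as a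
finitely supported probability distribution over partitions (given by their cell maps). -/
def PaddedDecomp (X : Type*) [MetricSpace X] (Δ ε δ : ℝ) : Prop :=
  ∃ (n : ℕ) (w : Fin n → ℝ) (P : Fin n → X → Set X),
    (∀ i, 0 ≤ w i) ∧ (∑ i, w i = 1) ∧
    (∀ i x, x ∈ P i x) ∧
    (∀ i x y, y ∈ P i x → P i y = P i x) ∧
    (∀ i x, EMetric.diam (P i x) ≤ ENNReal.ofReal Δ) ∧
    (∀ x : X, δ ≤ ∑ i, if Metric.closedBall x (ε * Δ) ⊆ P i x then w i else 0)

/-- `X` has Nagata dimension at most `d` with constant `γ`. -/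
def HasNagataDim (X : Type*) [MetricSpace X] (d : ℕ) (γ : ℝ) : Prop :=
  ∀ s : ℝ, 0 < s → ∃ 𝒞 : Set (Set X),
    (∀ C ∈ 𝒞, C.Nonempty) ∧ (⋃₀ 𝒞 = Set.univ) ∧
    (∀ C ∈ 𝒞, EMetric.diam C ≤ ENNReal.ofReal (γ * s)) ∧
    (∀ A : Set X, EMetric.diam A ≤ ENNReal.ofReal s →
      {C ∈ 𝒞 | (C ∩ A).Nonempty}.Finite ∧ {C ∈ 𝒞 | (C ∩ A).Nonempty}.ncard ≤ d + 1)

/-!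
Fix a Nagata cover `𝒞` at scale `s = Δ / (2γ)` and put `t = εΔ`. For each level `i ≤ d`,
partition `X` according to which members of `𝒞` lie within distance `t (2i + 1)`: two points in
one cell are both that close to the member containing the cell's centre, so the cell has diameter
at most `γ s + 2t (2i + 1) ≤ Δ`. Around a fixed `x`, the members within distance `2tj`,
`j = 0, …, d + 1`, form an increasing chain of nonempty sets of at most `d + 1` elements (they all
meet a ball of diameter `s`), so the chain is constant from some `i ≤ d` to `i + 1`; every point of
the `t`-ball around `x` then sees the same members at distance `t (2i + 1)` as `x`, i.e. the ball
lies in its cell at level `i`. Picking the level uniformly gives padding probability `1 / (d + 1)`.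
-/

open Metric

lemma Monotone.exists_eq_succ_of_ncard_le {α : Type*} {S : ℕ → Set α} {d : ℕ}
    (hS : Monotone S) (h0 : (S 0).Nonempty) (hfin : (S (d + 1)).Finite)
    (hcard : (S (d + 1)).ncard ≤ d + 1) : ∃ i ≤ d, S i = S (i + 1) := by
  by_contra! hne
  have hgrow : ∀ j ≤ d + 1, j + 1 ≤ (S j).ncard := by
    intro j hj
    induction j with
    | zero => exact (Set.ncard_pos (hfin.subset (hS (Nat.zero_le _)))).2 h0
    | succ j ih =>
      have hlt := Set.ncard_lt_ncard
        ((hS (Nat.le_add_right j 1)).ssubset_of_ne (hne j (by omega))) (hfin.subset (hS hj))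
      have := ih (by omega)
      omega
  have := hgrow (d + 1) le_rfl
  omega

section NearMembers

variable {X : Type*} [PseudoMetricSpace X]

def nearMembers (𝒞 : Set (Set X)) (x : X) (r : ℝ) : Set (Set X) :=
  {C ∈ 𝒞 | x ∈ cthickening r C}

def levelCell (𝒞 : Set (Set X)) (r : ℝ) (x : X) : Set X :=
  {y | nearMembers 𝒞 y r = nearMembers 𝒞 x r}

def HasMultiplicityLE (𝒞 : Set (Set X)) (s : ℝ) (d : ℕ) : Prop :=
  ∀ A : Set X, ediam A ≤ ENNReal.ofReal s →
    {C ∈ 𝒞 | (C ∩ A).Nonempty}.Finite ∧ {C ∈ 𝒞 | (C ∩ A).Nonempty}.ncard ≤ d + 1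

variable {𝒞 : Set (Set X)} {x y : X} {r r' : ℝ}

lemma nearMembers_mono (h : r ≤ r') : nearMembers 𝒞 x r ⊆ nearMembers 𝒞 x r' :=
  fun _ hC => ⟨hC.1, cthickening_mono h _ hC.2⟩

lemma nearMembers_subset_of_dist_le {e : ℝ} (hr : 0 ≤ r) (h : dist y x ≤ e) :
    nearMembers 𝒞 x r ⊆ nearMembers 𝒞 y (r + e) := by
  rintro C ⟨hC, hxC⟩
  refine ⟨hC, mem_cthickening_iff.2 ?_⟩
  calc infEDist y C ≤ infEDist x C + edist y x := infEDist_le_infEDist_add_edist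
    _ ≤ ENNReal.ofReal r + ENNReal.ofReal e :=
      add_le_add (mem_cthickening_iff.1 hxC) ((edist_le_ofReal (dist_nonneg.trans h)).2 h)
    _ = ENNReal.ofReal (r + e) := (ENNReal.ofReal_add hr (dist_nonneg.trans h)).symm

lemma nearMembers_finite_ncard_le {s : ℝ} {d : ℕ} (hmult : HasMultiplicityLE 𝒞 s d)
    (hr : 0 ≤ r) (hrs : 2 * r < s) (x : X) :
    (nearMembers 𝒞 x r).Finite ∧ (nearMembers 𝒞 x r).ncard ≤ d + 1 := by
  have hball : ediam (ball x (s / 2)) ≤ ENNReal.ofReal s :=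
    ediam_le_of_forall_dist_le fun a ha b hb => by
      linarith [dist_triangle_right a b x, mem_ball.1 ha, mem_ball.1 hb]
  obtain ⟨hfin, hcard⟩ := hmult _ hball
  have hsub : nearMembers 𝒞 x r ⊆ {C ∈ 𝒞 | (C ∩ ball x (s / 2)).Nonempty} := by
    rintro C ⟨hC, hxC⟩
    have hlt : infEDist x C < ENNReal.ofReal (s / 2) :=
      (mem_cthickening_iff.1 hxC).trans_lt ((ENNReal.ofReal_lt_ofReal_iff (by linarith)).2
        (by linarith))
    obtain ⟨c, hc, hxc⟩ := infEDist_lt_iff.1 hlt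
    exact ⟨hC, c, hc, mem_ball'.2 (edist_lt_ofReal.1 hxc)⟩
  exact ⟨hfin.subset hsub, (Set.ncard_le_ncard hsub hfin).trans hcard⟩

lemma mem_levelCell_self : x ∈ levelCell 𝒞 r x := rfl

lemma levelCell_eq_of_mem (h : y ∈ levelCell 𝒞 r x) : levelCell 𝒞 r y = levelCell 𝒞 r x := by
  ext z
  exact ⟨fun hz => hz.out.trans h.out, fun hz => hz.out.trans h.out.symm⟩

lemma ediam_levelCell_le {D : ℝ} (hcov : ⋃₀ 𝒞 = Set.univ)
    (hdiam : ∀ C ∈ 𝒞, ediam C ≤ ENNReal.ofReal D) (hD : 0 ≤ D) (hr : 0 ≤ r) (x : X) :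
    ediam (levelCell 𝒞 r x) ≤ ENNReal.ofReal (D + 2 * r) := by
  obtain ⟨C, hC, hxC⟩ := Set.mem_sUnion.1 (hcov ▸ Set.mem_univ x)
  have hcell : levelCell 𝒞 r x ⊆ cthickening r C := fun y hy =>
    (show C ∈ nearMembers 𝒞 y r from hy.out ▸ ⟨hC, self_subset_cthickening C hxC⟩).2
  lift r to NNReal using hr
  calc ediam (levelCell 𝒞 r x) ≤ ediam C + 2 * r :=
        (ediam_mono hcell).trans (ediam_cthickening_le r)
    _ ≤ ENNReal.ofReal D + ENNReal.ofReal (2 * r) := by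
        gcongr
        · exact hdiam C hC
        · rw [ENNReal.ofReal_mul zero_le_two, ENNReal.ofReal_ofNat, ENNReal.ofReal_coe_nnreal]
    _ = ENNReal.ofReal (D + 2 * r) := (ENNReal.ofReal_add hD (by positivity)).symm

lemma closedBall_subset_levelCell {t : ℝ} (htr : t ≤ r)
    (h : nearMembers 𝒞 x (r + t) ⊆ nearMembers 𝒞 x (r - t)) :
    closedBall x t ⊆ levelCell 𝒞 r x := by
  intro y hy
  have hyx : dist y x ≤ t := mem_closedBall.1 hy
  have ht : 0 ≤ t := dist_nonneg.trans hyx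
  apply Set.Subset.antisymm
  · calc nearMembers 𝒞 y r ⊆ nearMembers 𝒞 x (r + t) :=
          nearMembers_subset_of_dist_le (ht.trans htr) (by rwa [dist_comm])
      _ ⊆ nearMembers 𝒞 x (r - t) := h
      _ ⊆ nearMembers 𝒞 x r := nearMembers_mono (by linarith)
  · calc nearMembers 𝒞 x r ⊆ nearMembers 𝒞 x (r + t) := nearMembers_mono (by linarith)
      _ ⊆ nearMembers 𝒞 x (r - t) := h
      _ ⊆ nearMembers 𝒞 y (r - t + t) := nearMembers_subset_of_dist_le (by linarith) hyx
      _ = nearMembers 𝒞 y r := by rw [sub_add_cancel]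

lemma exists_closedBall_subset_levelCell {s t : ℝ} {d : ℕ} (hcov : ⋃₀ 𝒞 = Set.univ)
    (hmult : HasMultiplicityLE 𝒞 s d) (ht : 0 ≤ t) (hts : 4 * t * (d + 1) < s) (x : X) :
    ∃ i : Fin (d + 1), closedBall x t ⊆ levelCell 𝒞 (t * (2 * i + 1)) x := by
  set S : ℕ → Set (Set X) := fun j => nearMembers 𝒞 x (2 * t * j)
  have hS : Monotone S := fun i j hij => nearMembers_mono (by gcongr)
  have h0 : (S 0).Nonempty := by
    obtain ⟨C, hC, hxC⟩ := Set.mem_sUnion.1 (hcov ▸ Set.mem_univ x)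
    exact ⟨C, hC, self_subset_cthickening C hxC⟩
  obtain ⟨hfin, hcard⟩ :=
    nearMembers_finite_ncard_le (r := 2 * t * ↑(d + 1)) hmult (by positivity)
      (by push_cast; linarith) x
  obtain ⟨i, hid, hi⟩ := hS.exists_eq_succ_of_ncard_le h0 hfin hcard
  refine ⟨⟨i, by omega⟩, closedBall_subset_levelCell (by nlinarith) ?_⟩
  have hup : t * (2 * i + 1) + t = 2 * t * ↑(i + 1) := by push_cast; ring
  have hdown : t * (2 * i + 1) - t = 2 * t * i := by ring
  simp only [hup, hdown]
  exact hi.symm.subset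

end NearMembers

lemma PaddedDecomp.of_exists_padded {X : Type*} [MetricSpace X] {Δ ε : ℝ} {n : ℕ}
    (P : Fin (n + 1) → X → Set X) (hmem : ∀ i x, x ∈ P i x)
    (hcell : ∀ i x y, y ∈ P i x → P i y = P i x) (hdiam : ∀ i x, ediam (P i x) ≤ ENNReal.ofReal Δ)
    (hpad : ∀ x, ∃ i, closedBall x (ε * Δ) ⊆ P i x) :
    PaddedDecomp X Δ ε (1 / ((n : ℝ) + 1)) := by
  refine ⟨n + 1, fun _ => 1 / ((n : ℝ) + 1), P, fun _ => by positivity, ?_, hmem, hcell, hdiam,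
    fun x => ?_⟩
  · simp only [sum_const, card_univ, Fintype.card_fin, nsmul_eq_mul]
    push_cast
    field_simp
  · obtain ⟨i, hi⟩ := hpad x
    refine le_trans ?_ (single_le_sum (fun j _ => ?_) (mem_univ i))
    · rw [if_pos hi]
    · split <;> positivity

/-- Bounded Nagata dimension implies padded decomposability: if `X` has Nagata dimension at
most `d` with constant `< γ`, then for every `k ∈ ℤ`, `X` admits a `2^k`-bounded
`(1/(100·γ·d²), 1/(d+1))`-padded stochastic decomposition. -/
theorem stmt13 {X : Type*} [MetricSpace X] (d : ℕ) (hd : 1 ≤ d) (γ : ℝ) (hγ : 1 ≤ γ)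
    (hN : ∃ γ' : ℝ, γ' < γ ∧ HasNagataDim X d γ') :
    ∀ k : ℤ, PaddedDecomp X ((2:ℝ) ^ k) (1 / (100 * γ * (d:ℝ) ^ 2)) (1 / ((d:ℝ) + 1)) := by
  obtain ⟨γ', hγ'γ, hNag⟩ := hN
  intro k
  have hd1 : (1 : ℝ) ≤ d := by exact_mod_cast hd
  set Δ : ℝ := 2 ^ k
  set t : ℝ := 1 / (100 * γ * (d:ℝ) ^ 2) * Δ
  have ht : 0 < t := by positivity
  have hΔ : Δ = 100 * γ * d ^ 2 * t := by simp only [t]; field_simp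
  have hts : 4 * t * (d + 1) < 50 * d ^ 2 * t := by
    have : 4 * ((d : ℝ) + 1) < 50 * d ^ 2 := by nlinarith
    linarith [mul_lt_mul_of_pos_right this ht]
  obtain ⟨𝒞, -, hcov, hdiam, hmult⟩ := hNag (50 * d ^ 2 * t) (by positivity)
  refine PaddedDecomp.of_exists_padded (fun i => levelCell 𝒞 (t * (2 * i + 1)))
    (fun _ _ => mem_levelCell_self) (fun _ _ _ => levelCell_eq_of_mem) (fun i x => ?_)
    (exists_closedBall_subset_levelCell hcov hmult ht.le hts)
  have hi : (i : ℝ) ≤ d := by exact_mod_cast Nat.lt_succ_iff.1 i.is_lt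
  have hγD : ∀ C ∈ 𝒞, ediam C ≤ ENNReal.ofReal (γ * (50 * d ^ 2 * t)) := fun C hC =>
    (hdiam C hC).trans (ENNReal.ofReal_le_ofReal (by gcongr))
  refine (ediam_levelCell_le hcov hγD (by positivity) (by positivity) x).trans
    (ENNReal.ofReal_le_ofReal ?_)
  rw [hΔ]
  nlinarith [mul_le_mul_of_nonneg_left hi ht.le, mul_le_mul_of_nonneg_left hγ
    (by positivity : (0 : ℝ) ≤ d ^ 2 * t)]
end

section
/- Let P be a partition of a metric space X into cells of diameter at most 2^j, and let x, y ∈ X. Denote by P(x) the cell containing x and set h_P(z) = min{dist(z, X∖P(z)), 2^j}. Then for any signs σ_C ∈ {−1,+1} assigned to the cells, |σ_{P(x)}·h_P(x) − σ_{P(y)}·h_P(y)| ≤ 2·min{d(x,y), 2^j}. -/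
/-!
The left-hand side is at most `h_P(x) + h_P(y) ≤ 2·2^j`. For the bound `2·d(x,y)`: if `x` and `y`
lie in the same cell, the signs agree and `h_P` is there a truncated distance to one fixed set,
hence `1`-Lipschitz; otherwise each point lies in the complement of the other's cell, so
`h_P(x), h_P(y) ≤ d(x,y)`.
-/

/-- The truncated distance to the complement of one's own cell:
`h_P(z) = min{dist(z, X ∖ P(z)), 2^j}` (interpreted as `2^j` when the complement is empty). -/
noncomputable def padFn {X : Type*} [MetricSpace X] (P : X → Set X) (j : ℤ) (z : X) : ℝ :=
  (min (EMetric.infEdist z (P z)ᶜ) (ENNReal.ofReal ((2:ℝ) ^ j))).toReal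

open Metric ENNReal

section TruncatedInfEDist

variable {X : Type*} [MetricSpace X]

lemma min_infEDist_le_min_infEDist_add_edist (s : Set X) (c : ℝ≥0∞) (x y : X) :
    min (infEDist x s) c ≤ min (infEDist y s) c + edist x y := by
  rw [← min_add_add_right]
  exact min_le_min infEDist_le_infEDist_add_edist le_self_add

lemma lipschitzWith_one_toReal_min_infEDist (s : Set X) {c : ℝ≥0∞} (hc : c ≠ ⊤) :
    LipschitzWith 1 fun z => (min (infEDist z s) c).toReal :=
  LipschitzWith.of_le_add fun x y => by
    have hy : min (infEDist y s) c ≠ ⊤ := ne_top_of_le_ne_top hc (min_le_right _ _)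
    rw [dist_edist, ← toReal_add hy (edist_ne_top x y)]
    exact toReal_mono (add_ne_top.2 ⟨hy, edist_ne_top x y⟩)
      (min_infEDist_le_min_infEDist_add_edist s c x y)

end TruncatedInfEDist

namespace padFn

variable {X : Type*} [MetricSpace X] (P : X → Set X) (j : ℤ)

lemma nonneg (z : X) : 0 ≤ padFn P j z := toReal_nonneg

lemma le_two_zpow (z : X) : padFn P j z ≤ (2:ℝ) ^ j := by
  have h := toReal_mono ofReal_ne_top
    (min_le_right (infEDist z (P z)ᶜ) (ENNReal.ofReal ((2:ℝ) ^ j)))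
  rwa [toReal_ofReal (by positivity)] at h

lemma le_dist_of_notMem {z w : X} (hw : w ∉ P z) : padFn P j z ≤ dist z w := by
  rw [dist_edist]
  exact toReal_mono (edist_ne_top z w)
    ((min_le_left _ _).trans (infEDist_le_edist_of_mem hw))

lemma abs_sub_le_dist_of_eq {x y : X} (h : P x = P y) :
    |padFn P j x - padFn P j y| ≤ dist x y := by
  have hlip := (lipschitzWith_one_toReal_min_infEDist (P y)ᶜ
    (ofReal_ne_top (r := (2:ℝ) ^ j))).dist_le_mul x y
  rw [NNReal.coe_one, one_mul, Real.dist_eq] at hlip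
  rw [padFn, padFn, h]
  exact hlip

lemma abs_mul_sub_mul_le_add {s t : ℝ} (hs : |s| = 1) (ht : |t| = 1) (x y : X) :
    |s * padFn P j x - t * padFn P j y| ≤ padFn P j x + padFn P j y :=
  calc |s * padFn P j x - t * padFn P j y|
      ≤ |s * padFn P j x| + |t * padFn P j y| := abs_sub _ _
    _ = padFn P j x + padFn P j y := by
      rw [abs_mul, abs_mul, hs, ht, one_mul, one_mul, abs_of_nonneg (nonneg P j x),
        abs_of_nonneg (nonneg P j y)]

end padFn

theorem stmt14_general {X : Type*} [MetricSpace X] (j : ℤ) (P : X → Set X)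
    (hpart : ∀ x y, y ∈ P x → P y = P x)
    (σ : Set X → ℝ) (hσ : ∀ C : Set X, σ C = 1 ∨ σ C = -1)
    (x y : X) :
    |σ (P x) * padFn P j x - σ (P y) * padFn P j y| ≤
      2 * min (dist x y) ((2:ℝ) ^ j) := by
  have hσ1 (C : Set X) : |σ C| = 1 := by rcases hσ C with h | h <;> simp [h]
  have hsum := padFn.abs_mul_sub_mul_le_add P j (hσ1 (P x)) (hσ1 (P y)) x y
  rw [mul_min_of_nonneg _ _ zero_le_two, two_mul, two_mul]
  refine le_min ?_ ?_
  · by_cases hPxy : P x = P y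
    · calc |σ (P x) * padFn P j x - σ (P y) * padFn P j y|
          = |padFn P j x - padFn P j y| := by rw [hPxy, ← mul_sub, abs_mul, hσ1, one_mul]
        _ ≤ dist x y := padFn.abs_sub_le_dist_of_eq P j hPxy
        _ ≤ dist x y + dist x y := le_add_of_nonneg_left dist_nonneg
    · have hyx : y ∉ P x := fun h => hPxy (hpart x y h).symm
      have hxy : x ∉ P y := fun h => hPxy (hpart y x h)
      linarith [padFn.le_dist_of_notMem P j hyx, padFn.le_dist_of_notMem P j hxy, dist_comm x y]
  · linarith [padFn.le_two_zpow P j x, padFn.le_two_zpow P j y]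

/-- For a partition `P` of `X` into cells of diameter at most `2^j` and any signs `σ_C ∈ {±1}`
on cells, `|σ_{P(x)}·h_P(x) − σ_{P(y)}·h_P(y)| ≤ 2·min{d(x,y), 2^j}`. -/
theorem stmt14 {X : Type*} [MetricSpace X] (j : ℤ) (P : X → Set X)
    (hmem : ∀ x, x ∈ P x) (hpart : ∀ x y, y ∈ P x → P y = P x)
    (hdiam : ∀ x, EMetric.diam (P x) ≤ ENNReal.ofReal ((2:ℝ) ^ j))
    (σ : Set X → ℝ) (hσ : ∀ C : Set X, σ C = 1 ∨ σ C = -1)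
    (x y : X) :
    |σ (P x) * padFn P j x - σ (P y) * padFn P j y| ≤
      2 * min (dist x y) ((2:ℝ) ^ j) :=
  stmt14_general j P hpart σ hσ x y
end

section
/- Let (V,μ,ν) be a finite reversible ergodic Markov chain, Y a complete CAT(0) space, and for each y ∈ Y let T_yY denote the tangent cone at y with the 1-Lipschitz logarithm map π_y: Y → T_yY (which preserves distances to y and maps the 2-center of mass of a measure σ with c₂(σ)=y to the cone point). If for every y ∈ Y and every f: V → T_yY one has ∑_{u,v}ν(u)ν(v)·d̃(f(u),f(v))² ≤ Λ²·∑_{u,v}ν(u)μ(u→v)·d̃(f(u),f(v))², then for every f: V → Y one has ∑_{u,v}ν(u)ν(v)·d(f(u),f(v))² ≤ (2Λ)²·∑_{u,v}ν(u)μ(u→v)·d(f(u),f(v))². -/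
/-!
Let `y` be a barycenter of `f`, i.e. a minimizer of `z ↦ ∑ ν u d(f u, z)²`; it exists because, by
the CAT(0) midpoint inequality, minimizing sequences are Cauchy. The double sum is at most four
times the variance about `y`. The logarithm map `π y` preserves this variance and sends `y` to the
barycenter of `π y ∘ f`, so the variance is at most the double sum of `π y ∘ f` in the tangent
cone, where the Poincaré inequality applies; since `π y` is `1`-Lipschitz, the energy in the cone
is at most the energy in `Y`.
-/

open Set

open Filter Topology

def sqDeviation {V X : Type*} [Fintype V] [PseudoMetricSpace X] (ν : V → ℝ) (f : V → X)
    (z : X) : ℝ :=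
  ∑ u, ν u * dist (f u) z ^ 2

section Weights

variable {V X : Type*} [Fintype V] [PseudoMetricSpace X] {ν : V → ℝ}

lemma sqDeviation_nonneg (hν : ∀ u, 0 ≤ ν u) (f : V → X) (z : X) : 0 ≤ sqDeviation ν f z :=
  Finset.sum_nonneg fun u _ => mul_nonneg (hν u) (sq_nonneg _)

lemma continuous_sqDeviation (ν : V → ℝ) (f : V → X) : Continuous (sqDeviation ν f) :=
  continuous_finsetSum _ fun _ _ =>
    continuous_const.mul ((continuous_const.dist continuous_id).pow 2)

lemma sum_sum_mul_dist_sq_le_four_mul_sqDeviation (hν : ∀ u, 0 ≤ ν u) (hν1 : ∑ u, ν u = 1)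
    (f : V → X) (y : X) :
    ∑ u, ∑ v, ν u * ν v * dist (f u) (f v) ^ 2 ≤ 4 * sqDeviation ν f y := by
  calc ∑ u, ∑ v, ν u * ν v * dist (f u) (f v) ^ 2
      ≤ ∑ u, ∑ v, ν u * ν v * (2 * dist (f u) y ^ 2 + 2 * dist (f v) y ^ 2) := by
        gcongr with u _ v _
        · exact mul_nonneg (hν u) (hν v)
        have htri := dist_triangle_right (f u) (f v) y
        nlinarith [sq_nonneg (dist (f u) y - dist (f v) y), dist_nonneg (x := f u) (y := f v)]
    _ = 4 * sqDeviation ν f y := by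
        have hswap : ∑ u, ∑ v, ν u * ν v * (2 * dist (f v) y ^ 2)
            = ∑ u, ∑ v, ν u * ν v * (2 * dist (f u) y ^ 2) := by
          rw [Finset.sum_comm]; simp only [mul_comm (ν _) (ν _)]
        have hhalf : ∑ u, ∑ v, ν u * ν v * (2 * dist (f u) y ^ 2) = 2 * sqDeviation ν f y := by
          rw [sqDeviation, Finset.mul_sum]
          refine Finset.sum_congr rfl fun u _ => ?_
          rw [← Finset.sum_mul, ← Finset.mul_sum, hν1]
          ring
        simp only [mul_add, Finset.sum_add_distrib, hswap, hhalf]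
        ring

lemma sqDeviation_le_sum_sum_mul_dist_sq (hν : ∀ u, 0 ≤ ν u) (hν1 : ∑ u, ν u = 1)
    {f : V → X} {y : X} (hy : ∀ z, sqDeviation ν f y ≤ sqDeviation ν f z) :
    sqDeviation ν f y ≤ ∑ u, ∑ v, ν u * ν v * dist (f u) (f v) ^ 2 :=
  calc sqDeviation ν f y = ∑ v, ν v * sqDeviation ν f y := by
        rw [← Finset.sum_mul, hν1, one_mul]
    _ ≤ ∑ v, ν v * sqDeviation ν f (f v) := by gcongr with v; exacts [hν v, hy _]
    _ = ∑ u, ∑ v, ν u * ν v * dist (f u) (f v) ^ 2 := by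
        simp only [sqDeviation, Finset.mul_sum]
        rw [Finset.sum_comm]
        exact Finset.sum_congr rfl fun u _ => Finset.sum_congr rfl fun v _ => by ring

end Weights

lemma LipschitzWith.sum_sum_mul_dist_sq_le {V X Z : Type*} [Fintype V] [PseudoMetricSpace X]
    [PseudoMetricSpace Z] {φ : X → Z} (hφ : LipschitzWith 1 φ) {w : V → V → ℝ}
    (hw : ∀ u v, 0 ≤ w u v) (f : V → X) :
    ∑ u, ∑ v, w u v * dist (φ (f u)) (φ (f v)) ^ 2 ≤ ∑ u, ∑ v, w u v * dist (f u) (f v) ^ 2 := by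
  gcongr with u _ v _
  · exact hw u v
  simpa using hφ.dist_le_mul (f u) (f v)

section Barycenter

variable {Y V : Type*} [MetricSpace Y] [Fintype V] {c : ℝ} {ν : V → ℝ}

lemma PUnifConvex.dist_sq_midpoint_le (h : PUnifConvex Y 2 c) {γ : ℝ → Y} {y z : Y}
    (hγ : IsGeodesicSeg γ y z) (x : Y) :
    dist x (γ (1 / 2)) ^ 2 ≤ (dist x y ^ 2 + dist x z ^ 2) / 2 - c / 4 * dist y z ^ 2 := by
  have := h x y z γ hγ (1 / 2) ⟨by norm_num, by norm_num⟩
  simp only [Real.rpow_two] at this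
  linarith

lemma PUnifConvex.sqDeviation_midpoint_le (h : PUnifConvex Y 2 c) {γ : ℝ → Y} {y z : Y}
    (hγ : IsGeodesicSeg γ y z) (hν : ∀ u, 0 ≤ ν u) (hν1 : ∑ u, ν u = 1) (f : V → Y) :
    sqDeviation ν f (γ (1 / 2)) ≤
      (sqDeviation ν f y + sqDeviation ν f z) / 2 - c / 4 * dist y z ^ 2 :=
  calc sqDeviation ν f (γ (1 / 2))
      ≤ ∑ u, ν u * ((dist (f u) y ^ 2 + dist (f u) z ^ 2) / 2 - c / 4 * dist y z ^ 2) := by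
        unfold sqDeviation
        gcongr with u
        exacts [hν u, h.dist_sq_midpoint_le hγ (f u)]
    _ = (sqDeviation ν f y + sqDeviation ν f z) / 2 - c / 4 * dist y z ^ 2 := by
        simp only [sqDeviation, mul_sub, Finset.sum_sub_distrib, ← Finset.sum_mul, hν1, one_mul,
          mul_add, Finset.sum_add_distrib, mul_div_assoc', ← Finset.sum_div]

lemma PUnifConvex.dist_sq_le_of_forall_le_sqDeviation (hgeo : GeodesicSpace Y)
    (h : PUnifConvex Y 2 c) (hν : ∀ u, 0 ≤ ν u) (hν1 : ∑ u, ν u = 1) {f : V → Y} {m : ℝ}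
    (hm : ∀ w, m ≤ sqDeviation ν f w) (a b : Y) :
    c * dist a b ^ 2 ≤ 2 * (sqDeviation ν f a - m) + 2 * (sqDeviation ν f b - m) := by
  obtain ⟨γ, hγ⟩ := hgeo a b
  have := h.sqDeviation_midpoint_le hγ hν hν1 f
  have := hm (γ (1 / 2))
  linarith

lemma PUnifConvex.cauchySeq_of_sqDeviation_lt (hgeo : GeodesicSpace Y) (h : PUnifConvex Y 2 c)
    (hc : 0 < c) (hν : ∀ u, 0 ≤ ν u) (hν1 : ∑ u, ν u = 1) {f : V → Y} {m : ℝ}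
    (hm : ∀ w, m ≤ sqDeviation ν f w) {z : ℕ → Y}
    (hz : ∀ n : ℕ, sqDeviation ν f (z n) < m + 1 / (n + 1)) :
    CauchySeq z := by
  refine cauchySeq_of_le_tendsto_0 (fun N : ℕ => √(4 / c * (1 / (N + 1))))
    (fun n k N hn hk => ?_) ?_
  · have hn' : (1 : ℝ) / (n + 1) ≤ 1 / (N + 1) := by gcongr
    have hk' : (1 : ℝ) / (k + 1) ≤ 1 / (N + 1) := by gcongr
    have := h.dist_sq_le_of_forall_le_sqDeviation hgeo hν hν1 hm (z n) (z k)
    rw [Real.le_sqrt dist_nonneg (by positivity), div_mul_eq_mul_div, le_div_iff₀ hc]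
    linarith [hz n, hz k]
  · have := tendsto_one_div_add_atTop_nhds_zero_nat.const_mul (4 / c)
    rw [mul_zero] at this
    simpa only [Real.sqrt_zero, Function.comp_def] using
      (Real.continuous_sqrt.tendsto 0).comp this

theorem PUnifConvex.exists_forall_sqDeviation_le [CompleteSpace Y] (hgeo : GeodesicSpace Y)
    (h : PUnifConvex Y 2 c) (hc : 0 < c) (hν : ∀ u, 0 ≤ ν u) (hν1 : ∑ u, ν u = 1) (f : V → Y) :
    ∃ y, ∀ z, sqDeviation ν f y ≤ sqDeviation ν f z := by
  obtain ⟨u₀⟩ : Nonempty V := by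
    by_contra hV
    simp [not_nonempty_iff.mp hV] at hν1
  have : Nonempty Y := ⟨f u₀⟩
  set m := ⨅ z, sqDeviation ν f z
  have hm : ∀ z, m ≤ sqDeviation ν f z :=
    ciInf_le ⟨0, Set.forall_mem_range.2 (sqDeviation_nonneg hν f)⟩
  have hε : Tendsto (fun n : ℕ => m + 1 / (n + 1)) atTop (𝓝 m) := by
    simpa only [add_zero] using
      (tendsto_const_nhds : Tendsto (fun _ : ℕ => m) atTop (𝓝 m)).add
        tendsto_one_div_add_atTop_nhds_zero_nat
  choose z hz using fun n : ℕ =>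
    exists_lt_of_ciInf_lt (lt_add_of_pos_right m (Nat.one_div_pos_of_nat (n := n)))
  obtain ⟨y, hy⟩ :=
    cauchySeq_tendsto_of_complete (h.cauchySeq_of_sqDeviation_lt hgeo hc hν hν1 hm hz)
  have hFy : sqDeviation ν f y ≤ m :=
    le_of_tendsto_of_tendsto' (((continuous_sqDeviation ν f).tendsto y).comp hy) hε
      fun n => (hz n).le
  exact ⟨y, fun w => hFy.trans (hm w)⟩

end Barycenter

theorem stmt15_general {Y : Type*} [MetricSpace Y] [CompleteSpace Y]
    (hgeo : GeodesicSpace Y) (hCAT : PUnifConvex Y 2 1)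
    (T : Y → Type*) (instT : ∀ y, MetricSpace (T y)) (π : ∀ y : Y, Y → T y)
    (hLip : ∀ y : Y, LipschitzWith 1 (π y))
    (hdist : ∀ y z : Y, dist (π y y) (π y z) = dist y z)
    {V : Type*} [Fintype V] (ν : V → ℝ) (μ : V → V → ℝ)
    (hν : ∀ u, 0 ≤ ν u) (hν1 : ∑ u, ν u = 1)
    (hμ : ∀ u v, 0 ≤ μ u v)
    (hcm : ∀ (y : Y) (g : V → Y),
      (∀ z : Y, ∑ u, ν u * dist (g u) y ^ 2 ≤ ∑ u, ν u * dist (g u) z ^ 2) →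
      ∀ w : T y, ∑ u, ν u * dist (π y (g u)) (π y y) ^ 2 ≤
        ∑ u, ν u * dist (π y (g u)) w ^ 2)
    (Λ : ℝ)
    (hpoin : ∀ (y : Y) (g : V → T y),
      ∑ u, ∑ v, ν u * ν v * dist (g u) (g v) ^ 2 ≤
        Λ ^ 2 * ∑ u, ∑ v, ν u * μ u v * dist (g u) (g v) ^ 2) :
    ∀ f : V → Y,
      ∑ u, ∑ v, ν u * ν v * dist (f u) (f v) ^ 2 ≤
        (2 * Λ) ^ 2 * ∑ u, ∑ v, ν u * μ u v * dist (f u) (f v) ^ 2 := by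
  intro f
  obtain ⟨y, hy⟩ := hCAT.exists_forall_sqDeviation_le hgeo one_pos hν hν1 f
  have hvar : sqDeviation ν f y = sqDeviation ν (π y ∘ f) (π y y) :=
    Finset.sum_congr rfl fun u _ => by
      rw [Function.comp_apply, dist_comm (π y _), hdist, dist_comm]
  calc ∑ u, ∑ v, ν u * ν v * dist (f u) (f v) ^ 2
      ≤ 4 * sqDeviation ν f y := sum_sum_mul_dist_sq_le_four_mul_sqDeviation hν hν1 f y
    _ ≤ 4 * ∑ u, ∑ v, ν u * ν v * dist (π y (f u)) (π y (f v)) ^ 2 := by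
        rw [hvar]
        gcongr
        exact sqDeviation_le_sum_sum_mul_dist_sq hν hν1 (hcm y f hy)
    _ ≤ 4 * (Λ ^ 2 * ∑ u, ∑ v, ν u * μ u v * dist (π y (f u)) (π y (f v)) ^ 2) := by
        gcongr
        exact hpoin y (π y ∘ f)
    _ ≤ (2 * Λ) ^ 2 * ∑ u, ∑ v, ν u * μ u v * dist (f u) (f v) ^ 2 := by
        rw [mul_pow, ← mul_assoc, show (2 : ℝ) ^ 2 = 4 by norm_num]
        gcongr 4 * Λ ^ 2 * ?_
        exact (hLip y).sum_sum_mul_dist_sq_le (fun u v => mul_nonneg (hν u) (hμ u v)) f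

/-- Wang's trick: transferring a Poincaré inequality from all tangent cones of a complete
CAT(0) space `Y` to `Y` itself, at the cost of a factor `2`. The tangent cones are abstracted
as metric spaces `T y` with `1`-Lipschitz logarithm maps `π y : Y → T y` preserving distances
to `y` and mapping centers of mass to the cone point. -/
theorem stmt15 {Y : Type*} [MetricSpace Y] [CompleteSpace Y]
    (hgeo : GeodesicSpace Y) (hCAT : PUnifConvex Y 2 1)
    (T : Y → Type*) (instT : ∀ y, MetricSpace (T y)) (π : ∀ y : Y, Y → T y)
    (hLip : ∀ y : Y, LipschitzWith 1 (π y))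
    (hdist : ∀ y z : Y, dist (π y y) (π y z) = dist y z)
    {V : Type*} [Fintype V] (ν : V → ℝ) (μ : V → V → ℝ)
    (hν : ∀ u, 0 ≤ ν u) (hν1 : ∑ u, ν u = 1)
    (hμ : ∀ u v, 0 ≤ μ u v) (hrow : ∀ u, ∑ v, μ u v = 1)
    (hrev : ∀ u v, ν u * μ u v = ν v * μ v u)
    (hcm : ∀ (y : Y) (g : V → Y),
      (∀ z : Y, ∑ u, ν u * dist (g u) y ^ 2 ≤ ∑ u, ν u * dist (g u) z ^ 2) →
      ∀ w : T y, ∑ u, ν u * dist (π y (g u)) (π y y) ^ 2 ≤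
        ∑ u, ν u * dist (π y (g u)) w ^ 2)
    (Λ : ℝ) (hΛ : 0 ≤ Λ)
    (hpoin : ∀ (y : Y) (g : V → T y),
      ∑ u, ∑ v, ν u * ν v * dist (g u) (g v) ^ 2 ≤
        Λ ^ 2 * ∑ u, ∑ v, ν u * μ u v * dist (g u) (g v) ^ 2) :
    ∀ f : V → Y,
      ∑ u, ∑ v, ν u * ν v * dist (f u) (f v) ^ 2 ≤
        (2 * Λ) ^ 2 * ∑ u, ∑ v, ν u * μ u v * dist (f u) (f v) ^ 2 :=
  stmt15_general hgeo hCAT T instT π hLip hdist ν μ hν hν1 hμ hcm Λ hpoin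
end
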